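/- arXiv:2408.02411 — 5 statements merged into one kernel-verified Lean document; each statement's English description precedes it below -/
import Mathlib

section
/- Let < be a convex total order on the set Δ⁺ of positive roots, and let α < β be a minimal pair with α+β ∈ Δ⁺. Then there do not exist an integer k ≥ 2 and positive roots γ₁,…,γ_k ∈ Δ⁺ with α < γ_a < β for all 1 ≤ a ≤ k and γ₁+⋯+γ_k = α+β. -/
noncomputable section

namespace ADEShuffle

/-- The Euler form of a quiver with vertex set `I`, arrow set `A`,
source map `s` and target map `t`. -/
def eulerForm {I A : Type} [Fintype I] [Fintype A] (s t : A → I) (v w : I → ℤ) : ℤ :=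
  (∑ i, v i * w i) - ∑ a, v (s a) * w (t a)

/-- The real-coefficients Euler form. -/
def eulerFormR {I A : Type} [Fintype I] [Fintype A] (s t : A → I) (v w : I → ℝ) : ℝ :=
  (∑ i, v i * w i) - ∑ a, v (s a) * w (t a)

/-- The Euler form evaluated on dimension vectors in `ℕ^I`. -/
def eulerN {I A : Type} [Fintype I] [Fintype A] (s t : A → I) (v w : I → ℕ) : ℤ :=
  eulerForm s t (fun i => (v i : ℤ)) (fun i => (w i : ℤ))

/-- Positive roots: nonzero `v ∈ ℕ^I` with `(v,v) = 2`, where `(v,w) = ⟨v,w⟩ + ⟨w,v⟩`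
is the symmetrized Euler form. -/
def IsPosRoot {I A : Type} [Fintype I] [Fintype A] (s t : A → I) (v : I → ℕ) : Prop :=
  v ≠ 0 ∧ eulerN s t v v + eulerN s t v v = 2

section Aux

variable {I A : Type} [Fintype I] [Fintype A] (s t : A → I)

/-- Cast a dimension vector to `ℤ` coefficients. -/
def cz (v : I → ℕ) : I → ℤ := fun i => (v i : ℤ)

lemma eulerN_eq (v w : I → ℕ) : eulerN s t v w = eulerForm s t (cz v) (cz w) := rfl

lemma cz_add (v w : I → ℕ) : cz (v + w) = cz v + cz w := by
  funext i; simp [cz]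

lemma cz_sum {k : ℕ} (f : Fin k → I → ℕ) : cz (∑ a, f a) = ∑ a, cz (f a) := by
  funext i; simp [cz, Finset.sum_apply]

lemma cz_ne_zero {v : I → ℕ} (hv : v ≠ 0) : cz v ≠ 0 := by
  obtain ⟨i, hi⟩ := Function.ne_iff.mp hv
  exact Function.ne_iff.mpr ⟨i, by simp [cz]; simpa using hi⟩

lemma eulerForm_add_left (v w u : I → ℤ) :
    eulerForm s t (v + w) u = eulerForm s t v u + eulerForm s t w u := by
  simp only [eulerForm, Pi.add_apply, add_mul, Finset.sum_add_distrib]; ring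

lemma eulerForm_add_right (v w u : I → ℤ) :
    eulerForm s t u (v + w) = eulerForm s t u v + eulerForm s t u w := by
  simp only [eulerForm, Pi.add_apply, mul_add, Finset.sum_add_distrib]; ring

lemma eulerForm_sum_left {k : ℕ} (f : Fin k → I → ℤ) (w : I → ℤ) :
    eulerForm s t (∑ a, f a) w = ∑ a, eulerForm s t (f a) w := by
  have h1 : ∑ i, (∑ a, f a) i * w i = ∑ a, ∑ i, f a i * w i := by
    simp only [Finset.sum_apply, Finset.sum_mul]; exact Finset.sum_comm
  have h2 : ∑ c, (∑ a, f a) (s c) * w (t c) = ∑ a, ∑ c, f a (s c) * w (t c) := by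
    simp only [Finset.sum_apply, Finset.sum_mul]; exact Finset.sum_comm
  simp only [eulerForm, h1, h2, ← Finset.sum_sub_distrib]

lemma eulerForm_sum_right {k : ℕ} (f : Fin k → I → ℤ) (w : I → ℤ) :
    eulerForm s t w (∑ a, f a) = ∑ a, eulerForm s t w (f a) := by
  have h1 : ∑ i, w i * (∑ a, f a) i = ∑ a, ∑ i, w i * f a i := by
    simp only [Finset.sum_apply, Finset.mul_sum]; exact Finset.sum_comm
  have h2 : ∑ c, w (s c) * (∑ a, f a) (t c) = ∑ a, ∑ c, w (s c) * f a (t c) := by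
    simp only [Finset.sum_apply, Finset.mul_sum]; exact Finset.sum_comm
  simp only [eulerForm, h1, h2, ← Finset.sum_sub_distrib]

lemma two_le_norm
    (hPosDef : ∀ v : I → ℝ, v ≠ 0 → 0 < eulerFormR s t v v + eulerFormR s t v v)
    (v : I → ℤ) (hv : v ≠ 0) :
    2 ≤ eulerForm s t v v + eulerForm s t v v := by
  have hcast : eulerFormR s t (fun i => (v i : ℝ)) (fun i => (v i : ℝ))
      = ((eulerForm s t v v : ℤ) : ℝ) := by
    simp only [eulerFormR, eulerForm]; push_cast; try ring
  have hvr : (fun i => (v i : ℝ)) ≠ 0 := by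
    obtain ⟨i, hi⟩ := Function.ne_iff.mp hv
    refine Function.ne_iff.mpr ⟨i, ?_⟩
    simpa using (by exact_mod_cast hi : (v i : ℝ) ≠ 0)
  have hpos := hPosDef _ hvr
  rw [hcast] at hpos
  have h0 : (0:ℝ) < ((eulerForm s t v v : ℤ) : ℝ) := by linarith
  have h0' : 0 < eulerForm s t v v := by exact_mod_cast h0
  omega

lemma isPosRoot_add
    (hPosDef : ∀ v : I → ℝ, v ≠ 0 → 0 < eulerFormR s t v v + eulerFormR s t v v)
    (γ δ : I → ℕ) (hγ : IsPosRoot s t γ) (hδ : IsPosRoot s t δ)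
    (hneg : eulerN s t γ δ + eulerN s t δ γ < 0) : IsPosRoot s t (γ + δ) := by
  have hne : γ + δ ≠ 0 := by
    obtain ⟨i, hi⟩ := Function.ne_iff.mp hγ.1
    refine Function.ne_iff.mpr ⟨i, ?_⟩
    simp only [Pi.add_apply, Pi.zero_apply] at hi ⊢
    omega
  refine ⟨hne, ?_⟩
  have hexp : eulerN s t (γ + δ) (γ + δ)
      = eulerN s t γ γ + eulerN s t γ δ + eulerN s t δ γ + eulerN s t δ δ := by
    simp only [eulerN_eq, cz_add, eulerForm_add_left, eulerForm_add_right]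
    ring
  have hlow := two_le_norm s t hPosDef (cz (γ + δ)) (cz_ne_zero hne)
  rw [← eulerN_eq] at hlow
  have h1 := hγ.2
  have h2 := hδ.2
  omega

lemma exists_bad {k : ℕ} (hk : 2 ≤ k) (f : Fin k → I → ℤ)
    (hdiag : ∀ a, eulerForm s t (f a) (f a) + eulerForm s t (f a) (f a) = 2)
    (hS : eulerForm s t (∑ a, f a) (∑ a, f a)
        + eulerForm s t (∑ a, f a) (∑ a, f a) = 2) :
    ∃ a b, a ≠ b ∧ eulerForm s t (f a) (f b) + eulerForm s t (f b) (f a) < 0 := by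
  by_contra h
  push_neg at h
  have hexp : eulerForm s t (∑ a, f a) (∑ a, f a)
      = ∑ a, ∑ b, eulerForm s t (f a) (f b) := by
    rw [eulerForm_sum_left]
    exact Finset.sum_congr rfl fun a _ => eulerForm_sum_right s t f (f a)
  have hG : ∑ a, ∑ b, (eulerForm s t (f a) (f b) + eulerForm s t (f b) (f a)) = 2 := by
    calc ∑ a, ∑ b, (eulerForm s t (f a) (f b) + eulerForm s t (f b) (f a))
        = (∑ a, ∑ b, eulerForm s t (f a) (f b))
          + ∑ a, ∑ b, eulerForm s t (f b) (f a) := by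
          rw [← Finset.sum_add_distrib]
          exact Finset.sum_congr rfl fun a _ => Finset.sum_add_distrib
      _ = (∑ a, ∑ b, eulerForm s t (f a) (f b))
          + ∑ b, ∑ a, eulerForm s t (f b) (f a) := by rw [Finset.sum_comm]
      _ = 2 := by rw [← hexp]; exact hS
  have hlow : ∀ a : Fin k, (2:ℤ) ≤ ∑ b, (eulerForm s t (f a) (f b) + eulerForm s t (f b) (f a)) := by
    intro a
    have hnn : ∀ b ∈ Finset.univ, (0:ℤ) ≤ eulerForm s t (f a) (f b) + eulerForm s t (f b) (f a) := by
      intro b _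
      by_cases hab : a = b
      · subst hab; rw [hdiag a]; norm_num
      · exact h a b hab
    have := Finset.single_le_sum hnn (Finset.mem_univ a)
    rw [hdiag a] at this
    exact this
  have hbig : (2:ℤ) * k ≤ 2 := by
    calc (2:ℤ) * k = ∑ _a : Fin k, (2:ℤ) := by
          simp [Finset.sum_const, mul_comm]
      _ ≤ ∑ a, ∑ b, (eulerForm s t (f a) (f b) + eulerForm s t (f b) (f a)) :=
          Finset.sum_le_sum fun a _ => hlow a
      _ = 2 := hG
  have hk' : (2:ℤ) ≤ (k:ℤ) := by exact_mod_cast hk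
  linarith

end Aux

/-- if `α < β` is a minimal pair (for a convex total order on the
positive roots) with `α + β` a positive root, then there are no `k ≥ 2` positive roots
`γ₁, …, γ_k` strictly between `α` and `β` with `γ₁ + ⋯ + γ_k = α + β`. -/
theorem stmt0
    (I A : Type) [Fintype I] [Fintype A] (s t : A → I)
    (hNoLoops : ∀ a, s a ≠ t a)
    (hPosDef : ∀ v : I → ℝ, v ≠ 0 → 0 < eulerFormR s t v v + eulerFormR s t v v)
    (lt : (I → ℕ) → (I → ℕ) → Prop)
    (hIrrefl : ∀ α, IsPosRoot s t α → ¬ lt α α)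
    (hTrans : ∀ α β γ, IsPosRoot s t α → IsPosRoot s t β → IsPosRoot s t γ →
      lt α β → lt β γ → lt α γ)
    (hTotal : ∀ α β, IsPosRoot s t α → IsPosRoot s t β → α ≠ β → lt α β ∨ lt β α)
    (hConvex : ∀ α β, IsPosRoot s t α → IsPosRoot s t β → lt α β →
      IsPosRoot s t (α + β) → lt α (α + β) ∧ lt (α + β) β)
    (α β : I → ℕ) (hα : IsPosRoot s t α) (hβ : IsPosRoot s t β) (hlt : lt α β)
    (hsum : IsPosRoot s t (α + β))
    (hmin : ¬ ∃ α' β', IsPosRoot s t α' ∧ IsPosRoot s t β' ∧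
      lt α α' ∧ lt α' β' ∧ lt β' β ∧ α' + β' = α + β) :
    ¬ ∃ (k : ℕ) (γ : Fin k → (I → ℕ)), 2 ≤ k ∧
      (∀ a, IsPosRoot s t (γ a)) ∧
      (∀ a, lt α (γ a) ∧ lt (γ a) β) ∧
      (∑ a, γ a) = α + β := by
  rintro ⟨k, γ, hk, hroots, hbet, hsum'⟩
  induction k using Nat.strong_induction_on with
  | _ k ih =>
  -- find a pair with negative pairing
  obtain ⟨a, b, hab, hneg⟩ :
      ∃ a b, a ≠ b ∧ eulerForm s t (cz (γ a)) (cz (γ b))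
        + eulerForm s t (cz (γ b)) (cz (γ a)) < 0 := by
    apply exists_bad s t hk (fun a => cz (γ a))
    · intro a
      exact (hroots a).2
    · rw [← cz_sum, hsum']
      exact hsum.2
  have hnegN : eulerN s t (γ a) (γ b) + eulerN s t (γ b) (γ a) < 0 := hneg
  have hρ : IsPosRoot s t (γ a + γ b) :=
    isPosRoot_add s t hPosDef _ _ (hroots a) (hroots b) hnegN
  have hne : γ a ≠ γ b := by
    intro h
    rw [h] at hnegN
    have := (hroots b).2
    omega
  -- the main engine, for the sorted pair (p, q)
  have main : ∀ p q : I → ℕ, p + q = γ a + γ b → IsPosRoot s t p → IsPosRoot s t q →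
      lt p q → lt α p → lt q β → False := by
    intro p q hpq hp hq hpqlt hαp hqβ
    have hpqroot : IsPosRoot s t (p + q) := by rw [hpq]; exact hρ
    obtain ⟨h1, h2⟩ := hConvex p q hp hq hpqlt hpqroot
    have hρbet : lt α (γ a + γ b) ∧ lt (γ a + γ b) β := by
      rw [← hpq]
      exact ⟨hTrans α p (p + q) hα hp hpqroot hαp h1,
        hTrans (p + q) q β hpqroot hq hβ h2 hqβ⟩
    by_cases hk2 : k = 2
    · subst hk2
      have hsum2 : γ a + γ b = α + β := by
        rw [← hsum']
        fin_cases a <;> fin_cases b <;>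
          first
            | exact absurd rfl hab
            | (simp only [Fin.sum_univ_two]; first | rfl | exact add_comm _ _)
      exact hmin ⟨p, q, hp, hq, hαp, hpqlt, hqβ, by rw [hpq, hsum2]⟩
    · obtain ⟨m, rfl⟩ : ∃ m, k = m + 3 := ⟨k - 3, by omega⟩
      set σ : Equiv.Perm (Fin (m + 3)) := Equiv.swap 0 a with hσ
      have hb0 : σ.symm b ≠ 0 := by
        intro h
        apply hab
        have : b = σ 0 := by rw [← h, Equiv.apply_symm_apply]
        rw [hσ, Equiv.swap_apply_left] at this
        exact this.symm
      set e : Equiv.Perm (Fin (m + 3)) := (Equiv.swap 1 (σ.symm b)).trans σ with he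
      have h01 : (0 : Fin (m + 3)) ≠ 1 := Fin.ne_of_val_ne (by simp)
      have he0 : e 0 = a := by
        rw [he, Equiv.trans_apply, Equiv.swap_apply_of_ne_of_ne h01 (Ne.symm hb0),
          hσ, Equiv.swap_apply_left]
      have he1 : e 1 = b := by
        rw [he, Equiv.trans_apply, Equiv.swap_apply_left, Equiv.apply_symm_apply]
      set δ : Fin (m + 3) → (I → ℕ) := fun i => γ (e i) with hδ
      have hδ0 : δ 0 = γ a := by rw [hδ]; simp [he0]
      have hδ1 : δ 1 = γ b := by rw [hδ]; simp [he1]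
      set γ' : Fin (m + 2) → (I → ℕ) :=
        Fin.cases (γ a + γ b) (fun i => δ i.succ.succ) with hγ'
      have hγ'0 : γ' 0 = γ a + γ b := rfl
      have hγ's : ∀ i : Fin (m + 1), γ' i.succ = δ i.succ.succ := by
        intro i; rw [hγ']; exact Fin.cases_succ i
      have hsumδ : ∑ i, δ i = α + β := by
        rw [← hsum']; exact Equiv.sum_comp e γ
      have hsumγ' : ∑ i, γ' i = α + β := by
        rw [← hsumδ]
        rw [Fin.sum_univ_succ (f := γ'), Fin.sum_univ_succ (f := δ),
          Fin.sum_univ_succ (f := fun i : Fin (m + 2) => δ i.succ)]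
        simp only [hγ'0, hγ's, hδ0]
        rw [show ((0 : Fin (m + 2)).succ) = (1 : Fin (m + 3)) from rfl, hδ1, add_assoc]
      have hroots' : ∀ c, IsPosRoot s t (γ' c) := by
        intro c
        refine Fin.cases ?_ ?_ c
        · rw [hγ'0]; exact hρ
        · intro i; rw [hγ's]; exact hroots _
      have hbet' : ∀ c, lt α (γ' c) ∧ lt (γ' c) β := by
        intro c
        refine Fin.cases ?_ ?_ c
        · rw [hγ'0]; exact hρbet
        · intro i; rw [hγ's]; exact hbet _
      exact ih (m + 2) (by omega) γ' (by omega) hroots' hbet' hsumγ'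
  rcases hTotal (γ a) (γ b) (hroots a) (hroots b) hne with h | h
  · exact main (γ a) (γ b) rfl (hroots a) (hroots b) h (hbet a).1 (hbet b).2
  · exact main (γ b) (γ a) (add_comm _ _) (hroots b) (hroots a) h (hbet b).1 (hbet a).2


end ADEShuffle
end
end

section
/- Let < be a convex total order on Δ⁺ satisfying the additional property below, and let α < β be a minimal pair with α+β ∈ Δ⁺. Then there do not exist an integer k ≥ 1 and positive roots γ₁,…,γ_k ∈ Δ⁺ with α+β < γ_a < β for all 1 ≤ a ≤ k and γ₁+⋯+γ_k = α+2β. -/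
noncomputable section

namespace ADEShuffle

/-!
Write `(·, ·)` for the symmetrized Euler form and suppose `γ₁ + ⋯ + γ_k = α + 2β` with every
`γ_a` strictly between `α + β` and `β`. If `(γ_a, γ_b) = -1` for some `a ≠ b`, then `γ_a + γ_b`
is a root which by convexity lies in the same interval, so the family can be shortened.
Otherwise all `(γ_a, γ_b) ≥ 0`; together with `(γ_a, β) ≤ 1`, `(α + 2β, β) = 3` and
`(α + 2β, α) = 0` this forces `k = 3` and `(γ_a, α + β) = 1`. Then `α + β - γ_a` has norm `2`,
so it is `±ρ_a` for a root `ρ_a`: either `γ_a + ρ_a = α + β` with `ρ_a < α` (minimality of the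
pair) or `γ_a = α + β + ρ_a` with `ρ_a > α + β` (convexity). Adding the three relations writes a
sum of roots `< α` as the sum of `α, α, β` and roots `> α + β`, against the additional property.
-/

lemma exists_sum_add_eq_card_nsmul_add {G : Type*} [AddCommMonoid G] {P Q : G → Prop} {c : G}
    (S : Multiset G) (h : ∀ u ∈ S, (∃ ρ, P ρ ∧ u + ρ = c) ∨ (∃ ρ, Q ρ ∧ c + ρ = u)) :
    ∃ L R : Multiset G, (∀ v ∈ L, P v) ∧ (∀ v ∈ R, Q v) ∧
      S.sum + L.sum = Multiset.card S • c + R.sum := by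
  induction S using Multiset.induction_on with
  | empty => exact ⟨0, 0, by simp, by simp, by simp⟩
  | cons u S ih =>
    obtain ⟨L, R, hL, hR, hLR⟩ := ih fun v hv => h v (Multiset.mem_cons_of_mem hv)
    rcases h u (Multiset.mem_cons_self u S) with ⟨ρ, hρ, rfl⟩ | ⟨ρ, hρ, rfl⟩
    · refine ⟨ρ ::ₘ L, R, by simpa [hρ] using hL, hR, ?_⟩
      simp only [Multiset.sum_cons, Multiset.card_cons, succ_nsmul]
      calc u + S.sum + (ρ + L.sum) = (S.sum + L.sum) + (u + ρ) := by abel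
        _ = _ := by rw [hLR]; abel
    · refine ⟨L, ρ ::ₘ R, hL, by simpa [hρ] using hR, ?_⟩
      simp only [Multiset.sum_cons, Multiset.card_cons, succ_nsmul]
      calc c + ρ + S.sum + L.sum = (S.sum + L.sum) + (c + ρ) := by abel
        _ = _ := by rw [hLR]; abel

section Forms

variable {I A : Type} [Fintype I] [Fintype A]

def eulerBilin (s t : A → I) : LinearMap.BilinForm ℤ (I → ℤ) :=
  LinearMap.mk₂ ℤ (eulerForm s t)
    (fun _ _ _ => by simp only [eulerForm, Pi.add_apply, add_mul, Finset.sum_add_distrib]; ring)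
    (fun _ _ _ => by
      simp only [eulerForm, Pi.smul_apply, smul_eq_mul, mul_sub, Finset.mul_sum, mul_assoc])
    (fun _ _ _ => by simp only [eulerForm, Pi.add_apply, mul_add, Finset.sum_add_distrib]; ring)
    (fun _ _ _ => by
      simp only [eulerForm, Pi.smul_apply, smul_eq_mul, mul_sub, Finset.mul_sum, mul_left_comm])

def symEuler (s t : A → I) : LinearMap.BilinForm ℤ (I → ℤ) :=
  eulerBilin s t + (eulerBilin s t).flip

def EulerPosDef (s t : A → I) : Prop :=
  ∀ v : I → ℝ, v ≠ 0 → 0 < eulerFormR s t v v + eulerFormR s t v v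

variable {s t : A → I}

lemma symEuler_apply (v w : I → ℤ) :
    symEuler s t v w = eulerForm s t v w + eulerForm s t w v := rfl

lemma symEuler_comm (v w : I → ℤ) : symEuler s t v w = symEuler s t w v := by
  simp only [symEuler_apply, add_comm]

lemma symEuler_add_self (v w : I → ℤ) :
    symEuler s t (v + w) (v + w) = symEuler s t v v + 2 * symEuler s t v w + symEuler s t w w := by
  simp only [map_add, LinearMap.add_apply, symEuler_comm w v]; ring

lemma symEuler_sub_self (v w : I → ℤ) :
    symEuler s t (v - w) (v - w) = symEuler s t v v - 2 * symEuler s t v w + symEuler s t w w := by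
  simp only [map_sub, LinearMap.sub_apply, symEuler_comm w v]; ring

lemma two_le_symEuler_self (hPosDef : EulerPosDef s t) {v : I → ℤ} (hv : v ≠ 0) :
    2 ≤ symEuler s t v v := by
  have hvR : (fun i => (v i : ℝ)) ≠ 0 := fun h =>
    hv (funext fun i => by simpa using congrFun h i)
  have hcast : eulerFormR s t (fun i => (v i : ℝ)) (fun i => (v i : ℝ)) = eulerForm s t v v := by
    simp only [eulerFormR, eulerForm]; push_cast; rfl
  have hpos := hPosDef _ hvR
  rw [hcast] at hpos
  -- `(v, v) = 2 ⟨v, v⟩` is even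
  have : 0 < eulerForm s t v v := by exact_mod_cast (by linarith : (0 : ℝ) < eulerForm s t v v)
  rw [symEuler_apply]
  omega

end Forms

section Cast

variable {I : Type}

def toZ : (I → ℕ) →+ (I → ℤ) := (Nat.castAddMonoidHom ℤ).compLeft I

lemma toZ_apply (v : I → ℕ) (i : I) : toZ v i = v i := rfl

lemma toZ_injective : Function.Injective (toZ : (I → ℕ) → I → ℤ) := fun _ _ h =>
  funext fun i => Nat.cast_injective (congrFun h i)

end Cast

section Roots

variable {I A : Type} [Fintype I] [Fintype A] {s t : A → I}

lemma isPosRoot_iff {v : I → ℕ} :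
    IsPosRoot s t v ↔ v ≠ 0 ∧ symEuler s t (toZ v) (toZ v) = 2 := Iff.rfl

lemma IsPosRoot.symEuler_self {v : I → ℕ} (hv : IsPosRoot s t v) :
    symEuler s t (toZ v) (toZ v) = 2 := hv.2

lemma symEuler_toZ_le_one (hPosDef : EulerPosDef s t) {v w : I → ℕ} (hv : IsPosRoot s t v) (hw : IsPosRoot s t w) (hne : v ≠ w) :
    symEuler s t (toZ v) (toZ w) ≤ 1 := by
  have hsub : toZ v - toZ w ≠ 0 := sub_ne_zero.2 (toZ_injective.ne hne)
  have h := two_le_symEuler_self hPosDef hsub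
  rw [symEuler_sub_self, hv.symEuler_self, hw.symEuler_self] at h
  omega

lemma neg_one_le_symEuler_toZ (hPosDef : EulerPosDef s t) {v w : I → ℕ} (hv : IsPosRoot s t v) (hw : IsPosRoot s t w) :
    -1 ≤ symEuler s t (toZ v) (toZ w) := by
  have hadd : toZ v + toZ w ≠ 0 := by
    rw [← map_add]; exact (map_ne_zero_iff _ toZ_injective).2 (add_ne_zero.2 (.inl hv.1))
  have h := two_le_symEuler_self hPosDef hadd
  rw [symEuler_add_self, hv.symEuler_self, hw.symEuler_self] at h
  omega

lemma isPosRoot_add_iff {v w : I → ℕ} (hv : IsPosRoot s t v) (hw : IsPosRoot s t w) :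
    IsPosRoot s t (v + w) ↔ symEuler s t (toZ v) (toZ w) = -1 := by
  rw [isPosRoot_iff, map_add, symEuler_add_self, hv.symEuler_self, hw.symEuler_self]
  exact ⟨fun ⟨_, h⟩ => by omega, fun h => ⟨add_ne_zero.2 (.inl hv.1), by omega⟩⟩

lemma symEuler_toZ_nonpos_of_disjoint {p n : I → ℕ} (h : ∀ i, p i = 0 ∨ n i = 0) :
    symEuler s t (toZ p) (toZ n) ≤ 0 := by
  have hdiag : ∀ i, (p i : ℤ) * n i = 0 := fun i => by rcases h i with h | h <;> simp [h]
  simp only [symEuler_apply, eulerForm, toZ_apply, hdiag, mul_comm (n _ : ℤ) (p _),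
    Finset.sum_const_zero, zero_sub]
  have : 0 ≤ ∑ a, (p (s a) : ℤ) * n (t a) := by positivity
  have : 0 ≤ ∑ a, (p (t a) : ℤ) * n (s a) := by positivity
  linarith

lemma exists_isPosRoot_toZ_eq_or_eq_neg (hPosDef : EulerPosDef s t) {v : I → ℤ}
    (hv : symEuler s t v v = 2) :
    ∃ ρ, IsPosRoot s t ρ ∧ (toZ ρ = v ∨ toZ ρ = -v) := by
  obtain ⟨p, n, rfl, hdisj⟩ : ∃ p n : I → ℕ, v = toZ p - toZ n ∧ ∀ i, p i = 0 ∨ n i = 0 :=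
    ⟨fun i => (v i).toNat, fun i => (-v i).toNat,
      funext fun i => by rw [Pi.sub_apply, toZ_apply, toZ_apply]; omega,
      fun i => by show (v i).toNat = 0 ∨ (-v i).toNat = 0; omega⟩
  have hpn := symEuler_toZ_nonpos_of_disjoint (s := s) (t := t) hdisj
  rw [symEuler_sub_self] at hv
  rcases eq_or_ne n 0 with rfl | hn
  · simp only [map_zero, mul_zero, sub_zero, add_zero] at hv ⊢
    refine ⟨p, ⟨?_, hv⟩, .inl rfl⟩
    rintro rfl
    simp at hv
  rcases eq_or_ne p 0 with rfl | hp
  · simp only [map_zero, LinearMap.zero_apply, mul_zero, zero_sub, sub_zero, zero_add,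
      neg_neg] at hv ⊢
    exact ⟨n, ⟨hn, hv⟩, .inr rfl⟩
  have := two_le_symEuler_self hPosDef ((map_ne_zero_iff _ toZ_injective).2 hp)
  have := two_le_symEuler_self hPosDef ((map_ne_zero_iff _ toZ_injective).2 hn)
  omega

lemma symEuler_toZ_sum_left (M : Multiset (I → ℕ)) (w : I → ℤ) :
    symEuler s t (toZ M.sum) w = (M.map fun x => symEuler s t (toZ x) w).sum := by
  induction M using Multiset.induction_on with
  | empty => simp
  | cons x M ih => simp [ih]

lemma symEuler_toZ_add_self {u : I → ℕ} (hu : IsPosRoot s t u) :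
    symEuler s t (toZ u) (toZ (u + u)) = 4 := by
  rw [map_add, map_add, hu.symEuler_self]; rfl

lemma card_eq_three_and_symEuler_eq_one (hPosDef : EulerPosDef s t) {α β : I → ℕ} (hα : IsPosRoot s t α) (hβ : IsPosRoot s t β)
    (hαβ : symEuler s t (toZ α) (toZ β) = -1) {M : Multiset (I → ℕ)}
    (hroot : ∀ x ∈ M, IsPosRoot s t x) (hne : β ∉ M)
    (hpair : ∀ x ∈ M, ∀ y ∈ M.erase x, 0 ≤ symEuler s t (toZ x) (toZ y))
    (hM : M.sum = α + 2 • β) :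
    Multiset.card M = 3 ∧ ∀ x ∈ M, symEuler s t (toZ x) (toZ (α + β)) = 1 := by
  have hβα : symEuler s t (toZ β) (toZ α) = -1 := by rw [symEuler_comm, hαβ]
  have hle : ∀ x ∈ M, symEuler s t (toZ x) (toZ β) ≤ 1 := fun x hx =>
    symEuler_toZ_le_one hPosDef (hroot x hx) hβ (ne_of_mem_of_not_mem hx hne)
  have hge : ∀ x ∈ M, 2 ≤ symEuler s t (toZ x) (toZ M.sum) := fun x hx => by
    rw [← Multiset.sum_erase hx, map_add, map_add, (hroot x hx).symEuler_self,
      symEuler_comm, symEuler_toZ_sum_left]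
    have : 0 ≤ ((M.erase x).map fun y => symEuler s t (toZ y) (toZ x)).sum :=
      Multiset.sum_nonneg fun _ hb => by
        obtain ⟨y, hy, rfl⟩ := Multiset.mem_map.1 hb
        rw [symEuler_comm]; exact hpair x hx y hy
    omega
  have hsum : ∀ w, symEuler s t (toZ M.sum) w =
      symEuler s t (toZ α) w + 2 * symEuler s t (toZ β) w := fun w => by
    rw [hM, map_add, map_nsmul, map_add, map_nsmul, LinearMap.add_apply, LinearMap.smul_apply,
      nsmul_eq_mul, Nat.cast_ofNat]
  have hsum_comm : ∀ x, symEuler s t (toZ x) (toZ M.sum) =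
      symEuler s t (toZ x) (toZ α) + 2 * symEuler s t (toZ x) (toZ β) := fun x => by
    rw [symEuler_comm, hsum, symEuler_comm _ (toZ α), symEuler_comm _ (toZ β)]
  -- each `(x, α) = (x, α + 2β) - 2 (x, β)` is nonnegative, and they sum to `(α + 2β, α) = 0`
  have hα0 : ∀ x ∈ M, symEuler s t (toZ x) (toZ α) = 0 := by
    have htot : (M.map fun x => symEuler s t (toZ x) (toZ α)).sum = 0 := by
      rw [← symEuler_toZ_sum_left, hsum, hα.symEuler_self, hβα]; rfl
    have hnonneg : ∀ x ∈ M, 0 ≤ symEuler s t (toZ x) (toZ α) := fun x hx => by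
      have := hsum_comm x; have := hge x hx; have := hle x hx; omega
    intro x hx
    have := Multiset.single_le_sum (by simpa using hnonneg) _ (Multiset.mem_map_of_mem _ hx)
    have := hnonneg x hx
    omega
  have hβ1 : ∀ x ∈ M, symEuler s t (toZ x) (toZ β) = 1 := fun x hx => by
    have := hsum_comm x; have := hge x hx; have := hle x hx; have := hα0 x hx; omega
  refine ⟨?_, fun x hx => by rw [map_add, map_add, hα0 x hx, hβ1 x hx]; rfl⟩
  have htot : (M.map fun x => symEuler s t (toZ x) (toZ β)).sum = 3 := by
    rw [← symEuler_toZ_sum_left, hsum, hαβ, hβ.symEuler_self]; rfl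
  rw [Multiset.map_congr rfl hβ1, Multiset.map_const', Multiset.sum_replicate, nsmul_one] at htot
  exact_mod_cast htot

end Roots

structure IsConvexOrder {I A : Type} [Fintype I] [Fintype A] (s t : A → I)
    (lt : (I → ℕ) → (I → ℕ) → Prop) : Prop where
  irrefl : ∀ α, IsPosRoot s t α → ¬ lt α α
  trans : ∀ α β γ, IsPosRoot s t α → IsPosRoot s t β → IsPosRoot s t γ →
    lt α β → lt β γ → lt α γ
  total : ∀ α β, IsPosRoot s t α → IsPosRoot s t β → α ≠ β → lt α β ∨ lt β α
  convex : ∀ α β, IsPosRoot s t α → IsPosRoot s t β → lt α β →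
    IsPosRoot s t (α + β) → lt α (α + β) ∧ lt (α + β) β

structure IsMinimalPair {I A : Type} [Fintype I] [Fintype A] (s t : A → I)
    (lt : (I → ℕ) → (I → ℕ) → Prop) (α β : I → ℕ) : Prop where
  isPosRoot_left : IsPosRoot s t α
  isPosRoot_right : IsPosRoot s t β
  isPosRoot_add : IsPosRoot s t (α + β)
  lt_pair : lt α β
  minimal : ¬ ∃ α' β', IsPosRoot s t α' ∧ IsPosRoot s t β' ∧
    lt α α' ∧ lt α' β' ∧ lt β' β ∧ α' + β' = α + β

def HasNoEqualSumSplit {I A : Type} [Fintype I] [Fintype A] (s t : A → I)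
    (lt : (I → ℕ) → (I → ℕ) → Prop) : Prop :=
  ¬ ∃ (k l : ℕ) (γ : Fin k → (I → ℕ)) (δ : Fin l → (I → ℕ)),
    1 ≤ k ∧ 1 ≤ l ∧ (∀ a, IsPosRoot s t (γ a)) ∧ (∀ b, IsPosRoot s t (δ b)) ∧
    (∀ a b, lt (γ a) (δ b)) ∧ (∑ a, γ a) = (∑ b, δ b)

section Orders

variable {I A : Type} [Fintype I] [Fintype A] {s t : A → I} {lt : (I → ℕ) → (I → ℕ) → Prop}

lemma HasNoEqualSumSplit.sum_ne (h : HasNoEqualSumSplit s t lt)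
    {L R : Multiset (I → ℕ)} (hL : L ≠ 0) (hR : R ≠ 0)
    (hLroot : ∀ x ∈ L, IsPosRoot s t x) (hRroot : ∀ y ∈ R, IsPosRoot s t y)
    (hlt : ∀ x ∈ L, ∀ y ∈ R, lt x y) : L.sum ≠ R.sum := by
  intro heq
  refine h ⟨L.toList.length, R.toList.length, fun a => L.toList[a.1], fun b => R.toList[b.1],
    ?_, ?_, fun a => hLroot _ ?_, fun b => hRroot _ ?_, fun a b => hlt _ ?_ _ ?_, ?_⟩
  · simpa [Nat.one_le_iff_ne_zero] using hL
  · simpa [Nat.one_le_iff_ne_zero] using hR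
  any_goals exact Multiset.mem_toList.1 (List.getElem_mem _)
  rw [Fin.sum_univ_getElem, Fin.sum_univ_getElem, Multiset.sum_toList, Multiset.sum_toList, heq]

namespace IsConvexOrder

lemma asymm (ho : IsConvexOrder s t lt) {x y : I → ℕ} (hx : IsPosRoot s t x)
    (hy : IsPosRoot s t y) (hxy : lt x y) : ¬ lt y x :=
  fun hyx => ho.irrefl x hx (ho.trans x y x hx hy hx hxy hyx)

lemma add_mem_interval (ho : IsConvexOrder s t lt) {lo hi x y : I → ℕ}
    (hlo : IsPosRoot s t lo) (hhi : IsPosRoot s t hi)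
    (hx : IsPosRoot s t x ∧ lt lo x ∧ lt x hi) (hy : IsPosRoot s t y ∧ lt lo y ∧ lt y hi)
    (hne : x ≠ y) (hxy : IsPosRoot s t (x + y)) :
    IsPosRoot s t (x + y) ∧ lt lo (x + y) ∧ lt (x + y) hi := by
  refine ⟨hxy, ?_⟩
  rcases ho.total x y hx.1 hy.1 hne with h | h
  · obtain ⟨h1, h2⟩ := ho.convex x y hx.1 hy.1 h hxy
    exact ⟨ho.trans _ _ _ hlo hx.1 hxy hx.2.1 h1, ho.trans _ _ _ hxy hy.1 hhi h2 hy.2.2⟩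
  · rw [add_comm] at hxy ⊢
    obtain ⟨h1, h2⟩ := ho.convex y x hy.1 hx.1 h hxy
    exact ⟨ho.trans _ _ _ hlo hy.1 hxy hy.2.1 h1, ho.trans _ _ _ hxy hx.1 hhi h2 hx.2.2⟩

variable {α β : I → ℕ}

lemma exists_split_of_symEuler_eq_one (ho : IsConvexOrder s t lt) (hPosDef : EulerPosDef s t)
    (hp : IsMinimalPair s t lt α β) {u : I → ℕ} (hu : IsPosRoot s t u ∧ lt (α + β) u ∧ lt u β)
    (h1 : symEuler s t (toZ u) (toZ (α + β)) = 1) :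
    (∃ ρ, (IsPosRoot s t ρ ∧ lt ρ α) ∧ u + ρ = α + β) ∨
      (∃ ρ, (IsPosRoot s t ρ ∧ lt (α + β) ρ) ∧ α + β + ρ = u) := by
  obtain ⟨hα, hβ, hsum, -, hmin⟩ := hp
  obtain ⟨hu, hu1, hu2⟩ := hu
  have h2 : symEuler s t (toZ (α + β) - toZ u) (toZ (α + β) - toZ u) = 2 := by
    rw [symEuler_sub_self, hsum.symEuler_self, hu.symEuler_self, symEuler_comm, h1]; rfl
  obtain ⟨ρ, hρ, hρu | hρu⟩ := exists_isPosRoot_toZ_eq_or_eq_neg hPosDef h2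
  · have heq : u + ρ = α + β := toZ_injective (by rw [map_add, hρu]; abel)
    have hne : ρ ≠ u := by
      rintro rfl
      rw [← heq, symEuler_toZ_add_self hu] at h1
      exact absurd h1 (by decide)
    have hρu : lt ρ u := (ho.total ρ u hρ hu hne).resolve_right fun h =>
      ho.asymm hsum hu hu1 (heq ▸ (ho.convex u ρ hu hρ h (heq ▸ hsum)).1)
    have hρα : ρ ≠ α := by
      rintro rfl
      exact ho.irrefl β hβ (add_right_cancel (heq.trans (add_comm _ _)) ▸ hu2)
    refine .inl ⟨ρ, ⟨hρ, (ho.total ρ α hρ hα hρα).resolve_right fun h =>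
      hmin ⟨ρ, u, hρ, hu, h, hρu, hu2, (add_comm _ _).trans heq⟩⟩, heq⟩
  · have heq : α + β + ρ = u := toZ_injective (by rw [map_add, hρu]; abel)
    have hne : ρ ≠ α + β := by
      rintro rfl
      rw [← heq, symEuler_comm, symEuler_toZ_add_self hsum] at h1
      exact absurd h1 (by decide)
    refine .inr ⟨ρ, ⟨hρ, (ho.total (α + β) ρ hsum hρ hne.symm).resolve_right fun h =>
      ho.asymm hsum hu hu1 ?_⟩, heq⟩
    have hroot : IsPosRoot s t (ρ + (α + β)) := add_comm (α + β) ρ ▸ heq ▸ hu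
    simpa only [add_comm ρ, heq] using (ho.convex ρ (α + β) hρ hsum h hroot).2

lemma false_of_forall_symEuler_nonneg (ho : IsConvexOrder s t lt) (hPosDef : EulerPosDef s t)
    (hExtra : HasNoEqualSumSplit s t lt) (hp : IsMinimalPair s t lt α β)
    {M : Multiset (I → ℕ)} (hM : ∀ x ∈ M, IsPosRoot s t x ∧ lt (α + β) x ∧ lt x β)
    (hpair : ∀ x ∈ M, ∀ y ∈ M.erase x, 0 ≤ symEuler s t (toZ x) (toZ y))
    (hsumM : M.sum = α + 2 • β) : False := by
  have ⟨hα, hβ, hsum, hlt, _⟩ := hp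
  obtain ⟨hcard, hone⟩ := card_eq_three_and_symEuler_eq_one hPosDef hα hβ
    ((isPosRoot_add_iff hα hβ).1 hsum) (fun x hx => (hM x hx).1)
    (fun hβM => ho.irrefl β hβ (hM β hβM).2.2) hpair hsumM
  obtain ⟨L, R, hL, hR, hLR⟩ := exists_sum_add_eq_card_nsmul_add M fun u hu =>
    ho.exists_split_of_symEuler_eq_one hPosDef hp (hM u hu) (hone u hu)
  have hLR' : L.sum = (α ::ₘ α ::ₘ β ::ₘ R).sum := by
    rw [hsumM, hcard] at hLR
    funext i
    have := congrFun hLR i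
    simp only [Pi.add_apply, Pi.smul_apply, smul_eq_mul, Multiset.sum_cons] at this ⊢
    omega
  have hL0 : L ≠ 0 := by
    rintro rfl
    simp only [Multiset.sum_zero, Multiset.sum_cons] at hLR'
    exact hα.1 (add_eq_zero.1 hLR'.symm).1
  have hαlt := (ho.convex α β hα hβ hlt hsum).1
  refine hExtra.sum_ne hL0 (Multiset.cons_ne_zero) (fun x hx => (hL x hx).1) ?_ ?_ hLR'
  · simp only [Multiset.mem_cons]
    rintro y (rfl | rfl | rfl | hy)
    exacts [hα, hα, hβ, (hR y hy).1]
  · intro x hx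
    obtain ⟨hx, hxα⟩ := hL x hx
    simp only [Multiset.mem_cons]
    rintro y (rfl | rfl | rfl | hy)
    exacts [hxα, hxα, ho.trans _ _ _ hx hα hβ hxα hlt,
      ho.trans _ _ _ hx hsum (hR y hy).1 (ho.trans _ _ _ hx hα hsum hxα hαlt) (hR y hy).2]

lemma multiset_sum_ne (ho : IsConvexOrder s t lt) (hPosDef : EulerPosDef s t)
    (hExtra : HasNoEqualSumSplit s t lt) (hp : IsMinimalPair s t lt α β)
    (M : Multiset (I → ℕ)) (hM : ∀ x ∈ M, IsPosRoot s t x ∧ lt (α + β) x ∧ lt x β) :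
    M.sum ≠ α + 2 • β := by
  induction hn : Multiset.card M using Nat.strong_induction_on generalizing M with
  | _ n ih =>
  by_cases hmerge : ∃ x ∈ M, ∃ y ∈ M.erase x, symEuler s t (toZ x) (toZ y) = -1
  · obtain ⟨x, hx, y, hy, hxy⟩ := hmerge
    have hyM := Multiset.mem_of_mem_erase hy
    have hne : x ≠ y := by
      rintro rfl
      rw [(hM x hx).1.symEuler_self] at hxy
      exact absurd hxy (by decide)
    have hmem := ho.add_mem_interval hp.isPosRoot_add hp.isPosRoot_right (hM x hx) (hM y hyM) hne
      ((isPosRoot_add_iff (hM x hx).1 (hM y hyM).1).2 hxy)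
    have hsum' : ((x + y) ::ₘ (M.erase x).erase y).sum = M.sum := by
      rw [Multiset.sum_cons, ← Multiset.sum_erase hx, ← Multiset.sum_erase hy, add_assoc]
    have hcard : Multiset.card ((x + y) ::ₘ (M.erase x).erase y) < n := by
      have := Multiset.card_erase_add_one hx
      have := Multiset.card_erase_add_one hy
      rw [Multiset.card_cons]
      omega
    rw [← hsum']
    refine ih _ hcard _ ?_ rfl
    simp only [Multiset.mem_cons]
    rintro z (rfl | hz)
    exacts [hmem, hM z (Multiset.mem_of_mem_erase (Multiset.mem_of_mem_erase hz))]
  · push Not at hmerge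
    refine ho.false_of_forall_symEuler_nonneg hPosDef hExtra hp hM fun x hx y hy => ?_
    have := neg_one_le_symEuler_toZ hPosDef (hM x hx).1 (hM y (Multiset.mem_of_mem_erase hy)).1
    have := hmerge x hx y hy
    omega

end IsConvexOrder

end Orders

theorem stmt1_general
    (I A : Type) [Fintype I] [Fintype A] (s t : A → I)
    (hPosDef : ∀ v : I → ℝ, v ≠ 0 → 0 < eulerFormR s t v v + eulerFormR s t v v)
    (lt : (I → ℕ) → (I → ℕ) → Prop)
    (hIrrefl : ∀ α, IsPosRoot s t α → ¬ lt α α)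
    (hTrans : ∀ α β γ, IsPosRoot s t α → IsPosRoot s t β → IsPosRoot s t γ →
      lt α β → lt β γ → lt α γ)
    (hTotal : ∀ α β, IsPosRoot s t α → IsPosRoot s t β → α ≠ β → lt α β ∨ lt β α)
    (hConvex : ∀ α β, IsPosRoot s t α → IsPosRoot s t β → lt α β →
      IsPosRoot s t (α + β) → lt α (α + β) ∧ lt (α + β) β)
    (hExtra : ¬ ∃ (k l : ℕ) (γ : Fin k → (I → ℕ)) (δ : Fin l → (I → ℕ)),
      1 ≤ k ∧ 1 ≤ l ∧ (∀ a, IsPosRoot s t (γ a)) ∧ (∀ b, IsPosRoot s t (δ b)) ∧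
      (∀ a b, lt (γ a) (δ b)) ∧ (∑ a, γ a) = (∑ b, δ b))
    (α β : I → ℕ) (hα : IsPosRoot s t α) (hβ : IsPosRoot s t β) (hlt : lt α β)
    (hsum : IsPosRoot s t (α + β))
    (hmin : ¬ ∃ α' β', IsPosRoot s t α' ∧ IsPosRoot s t β' ∧
      lt α α' ∧ lt α' β' ∧ lt β' β ∧ α' + β' = α + β) :
    ¬ ∃ (k : ℕ) (γ : Fin k → (I → ℕ)), 1 ≤ k ∧
      (∀ a, IsPosRoot s t (γ a)) ∧
      (∀ a, lt (α + β) (γ a) ∧ lt (γ a) β) ∧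
      (∑ a, γ a) = α + 2 • β := by
  rintro ⟨k, γ, -, hroot, hbetween, hsumγ⟩
  refine IsConvexOrder.multiset_sum_ne ⟨hIrrefl, hTrans, hTotal, hConvex⟩ hPosDef hExtra
    ⟨hα, hβ, hsum, hlt, hmin⟩ (Finset.univ.val.map γ) ?_ hsumγ
  simp only [Multiset.mem_map]
  rintro _ ⟨a, -, rfl⟩
  exact ⟨hroot a, hbetween a⟩

/-- for a convex total order on the positive roots satisfying the
additional property (no family of roots `γ₁ ≤ … ≤ γ_k < δ₁ ≤ … ≤ δ_l` with equal sums),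
if `α < β` is a minimal pair with `α + β` a positive root, then there are no `k ≥ 1`
positive roots `γ₁, …, γ_k` with `α + β < γ_a < β` and `γ₁ + ⋯ + γ_k = α + 2β`. -/
theorem stmt1
    (I A : Type) [Fintype I] [Fintype A] (s t : A → I)
    (hNoLoops : ∀ a, s a ≠ t a)
    (hPosDef : ∀ v : I → ℝ, v ≠ 0 → 0 < eulerFormR s t v v + eulerFormR s t v v)
    (lt : (I → ℕ) → (I → ℕ) → Prop)
    (hIrrefl : ∀ α, IsPosRoot s t α → ¬ lt α α)
    (hTrans : ∀ α β γ, IsPosRoot s t α → IsPosRoot s t β → IsPosRoot s t γ →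
      lt α β → lt β γ → lt α γ)
    (hTotal : ∀ α β, IsPosRoot s t α → IsPosRoot s t β → α ≠ β → lt α β ∨ lt β α)
    (hConvex : ∀ α β, IsPosRoot s t α → IsPosRoot s t β → lt α β →
      IsPosRoot s t (α + β) → lt α (α + β) ∧ lt (α + β) β)
    (hExtra : ¬ ∃ (k l : ℕ) (γ : Fin k → (I → ℕ)) (δ : Fin l → (I → ℕ)),
      1 ≤ k ∧ 1 ≤ l ∧ (∀ a, IsPosRoot s t (γ a)) ∧ (∀ b, IsPosRoot s t (δ b)) ∧
      (∀ a b, lt (γ a) (δ b)) ∧ (∑ a, γ a) = (∑ b, δ b))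
    (α β : I → ℕ) (hα : IsPosRoot s t α) (hβ : IsPosRoot s t β) (hlt : lt α β)
    (hsum : IsPosRoot s t (α + β))
    (hmin : ¬ ∃ α' β', IsPosRoot s t α' ∧ IsPosRoot s t β' ∧
      lt α α' ∧ lt α' β' ∧ lt β' β ∧ α' + β' = α + β) :
    ¬ ∃ (k : ℕ) (γ : Fin k → (I → ℕ)), 1 ≤ k ∧
      (∀ a, IsPosRoot s t (γ a)) ∧
      (∀ a, lt (α + β) (γ a) ∧ lt (γ a) β) ∧
      (∑ a, γ a) = α + 2 • β :=
  stmt1_general I A s t hPosDef lt hIrrefl hTrans hTotal hConvex hExtra α β hα hβ hlt hsum hmin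

end ADEShuffle
end
end

section
/- Let (V,φ) and (W,ψ) be representations of Q and let I' ⊆ I. Suppose given, for each i ∈ I', a finite-dimensional vector space X_i together with linear maps f_i : V_i → X_i and g_i : X_i → W_i such that 0 → V_i → X_i → W_i → 0 is a short exact sequence (f_i injective, g_i surjective, Im f_i = Ker g_i), and, for each arrow a ∈ A with s(a), t(a) ∈ I', a linear map ξ_a : X_{s(a)} → X_{t(a)} satisfying ξ_a ∘ f_{s(a)} = f_{t(a)} ∘ φ_a and g_{t(a)} ∘ ξ_a = ψ_a ∘ g_{s(a)}. Then there exist vector spaces X_i and linear maps f_i : V_i → X_i, g_i : X_i → W_i for all i ∈ I ∖ I' with 0 → V_i → X_i → W_i → 0 exact, and linear maps ξ_a : X_{s(a)} → X_{t(a)} for all remaining arrows a ∈ A (those with s(a) ∉ I' or t(a) ∉ I'), such that ξ_a ∘ f_{s(a)} = f_{t(a)} ∘ φ_a and g_{t(a)} ∘ ξ_a = ψ_a ∘ g_{s(a)} hold for every arrow a ∈ A. (Equivalently, the restriction map Ext¹(W,V) → Ext¹(W|_{I'}, V|_{I'}) to the full subquiver on I' is surjective.) -/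
/-!
Over a field every short exact sequence `0 → V_i → X_i → W_i → 0` splits, so for `i ∈ I'` the
given extension is isomorphic to `V_i × W_i`, with `ξ_a` transported to a map of split extensions.
Take `V_i × W_i` at every vertex, the transported `ξ_a` on the arrows of the full subquiver on `I'`,
and `φ_a × ψ_a` on all other arrows: both kinds of maps are compatible with `inl` and `snd`.
-/

noncomputable section

namespace ADEShuffle

/-- A finite-dimensional representation of the quiver with vertices `I`, arrows `A`,
source map `s` and target map `t`, over the field `k`. -/
structure QuivRep (k : Type) [Field k] (I A : Type) (s t : A → I) where
  M : I → Type
  [instAdd : ∀ i, AddCommGroup (M i)]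
  [instMod : ∀ i, Module k (M i)]
  [instFD : ∀ i, FiniteDimensional k (M i)]
  map : ∀ a, M (s a) →ₗ[k] M (t a)

attribute [instance] QuivRep.instAdd QuivRep.instMod QuivRep.instFD

open LinearMap

section SplitExtension

variable {k : Type} [DivisionRing k]
  {V X W : Type} [AddCommGroup V] [Module k V] [AddCommGroup X] [Module k X]
  [AddCommGroup W] [Module k W]

theorem exists_prodEquiv_of_shortExact {f : V →ₗ[k] X} {g : X →ₗ[k] W}
    (hf : Function.Injective f) (hg : Function.Surjective g) (hfg : range f = ker g) :
    ∃ e : (V × W) ≃ₗ[k] X, e.toLinearMap ∘ₗ inl k V W = f ∧ g ∘ₗ e.toLinearMap = snd k V W := by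
  obtain ⟨σ, hσ⟩ := g.exists_rightInverse_of_surjective (range_eq_top.2 hg)
  let e := (exact_iff.2 hfg.symm).splitSurjectiveEquiv hf ⟨σ, hσ⟩
  exact ⟨e.1.symm, e.2.1.symm, (LinearEquiv.comp_toLinearMap_symm_eq _ _).2 e.2.2⟩

variable {V' X' W' : Type} [AddCommGroup V'] [Module k V'] [AddCommGroup X'] [Module k X']
  [AddCommGroup W'] [Module k W']

theorem conj_comp_inl_and_snd_comp_conj {f : V →ₗ[k] X} {g : X →ₗ[k] W}
    {f' : V' →ₗ[k] X'} {g' : X' →ₗ[k] W'} {φ : V →ₗ[k] V'} {ψ : W →ₗ[k] W'} {ξ : X →ₗ[k] X'}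
    (e : (V × W) ≃ₗ[k] X) (e' : (V' × W') ≃ₗ[k] X')
    (he : e.toLinearMap ∘ₗ inl k V W = f ∧ g ∘ₗ e.toLinearMap = snd k V W)
    (he' : e'.toLinearMap ∘ₗ inl k V' W' = f' ∧ g' ∘ₗ e'.toLinearMap = snd k V' W')
    (hξ : ξ ∘ₗ f = f' ∘ₗ φ ∧ g' ∘ₗ ξ = ψ ∘ₗ g) :
    (e'.symm.toLinearMap ∘ₗ ξ ∘ₗ e.toLinearMap) ∘ₗ inl k V W = inl k V' W' ∘ₗ φ ∧
      snd k V' W' ∘ₗ (e'.symm.toLinearMap ∘ₗ ξ ∘ₗ e.toLinearMap) = ψ ∘ₗ snd k V W := by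
  obtain ⟨he_inl, he_snd⟩ := he
  obtain ⟨he'_inl, he'_snd⟩ := he'
  have he'_symm_snd : snd k V' W' ∘ₗ e'.symm.toLinearMap = g' :=
    (LinearEquiv.comp_toLinearMap_symm_eq _ _).2 he'_snd.symm
  constructor
  · calc (e'.symm.toLinearMap ∘ₗ ξ ∘ₗ e.toLinearMap) ∘ₗ inl k V W
        = e'.symm.toLinearMap ∘ₗ (ξ ∘ₗ f) := by rw [← he_inl]; rfl
      _ = e'.symm.toLinearMap ∘ₗ (e'.toLinearMap ∘ₗ inl k V' W') ∘ₗ φ := by rw [hξ.1, he'_inl]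
      _ = inl k V' W' ∘ₗ φ := by ext <;> simp
  · calc snd k V' W' ∘ₗ (e'.symm.toLinearMap ∘ₗ ξ ∘ₗ e.toLinearMap)
        = (g' ∘ₗ ξ) ∘ₗ e.toLinearMap := by rw [← he'_symm_snd]; rfl
      _ = ψ ∘ₗ snd k V W := by rw [hξ.2, comp_assoc, he_snd]

end SplitExtension

section Gluing

variable {k : Type} [Field k] {I A : Type} {s t : A → I}

open Classical in
def QuivRep.prodGlue (V W : QuivRep k I A s t) (I' : Set I)
    (η : ∀ a, s a ∈ I' → t a ∈ I' → (V.M (s a) × W.M (s a) →ₗ[k] V.M (t a) × W.M (t a))) :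
    QuivRep k I A s t where
  M i := V.M i × W.M i
  map a := if h : s a ∈ I' ∧ t a ∈ I' then η a h.1 h.2 else (V.map a).prodMap (W.map a)

variable (V W : QuivRep k I A s t) (I' : Set I)
  (η : ∀ a, s a ∈ I' → t a ∈ I' → (V.M (s a) × W.M (s a) →ₗ[k] V.M (t a) × W.M (t a)))

theorem QuivRep.prodGlue_map_of_mem {a : A} (hs : s a ∈ I') (ht : t a ∈ I') :
    (V.prodGlue W I' η).map a = η a hs ht := by
  classical
  exact dif_pos ⟨hs, ht⟩

theorem QuivRep.prodGlue_map_of_not_mem {a : A} (h : ¬(s a ∈ I' ∧ t a ∈ I')) :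
    (V.prodGlue W I' η).map a = (V.map a).prodMap (W.map a) := by
  classical
  exact dif_neg h

theorem QuivRep.prodGlue_map_comp_inl_and_snd_comp_map
    (hη : ∀ a hs ht, η a hs ht ∘ₗ inl k _ _ = inl k _ _ ∘ₗ V.map a ∧
      snd k _ _ ∘ₗ η a hs ht = W.map a ∘ₗ snd k _ _) (a : A) :
    (V.prodGlue W I' η).map a ∘ₗ inl k _ _ = inl k _ _ ∘ₗ V.map a ∧
      snd k _ _ ∘ₗ (V.prodGlue W I' η).map a = W.map a ∘ₗ snd k _ _ := by
  by_cases h : s a ∈ I' ∧ t a ∈ I'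
  · rw [V.prodGlue_map_of_mem W I' η h.1 h.2]
    exact hη a h.1 h.2
  · rw [V.prodGlue_map_of_not_mem W I' η h]
    exact ⟨LinearMap.ext fun x => Prod.ext rfl (map_zero (W.map a)), rfl⟩

end Gluing

theorem stmt6_general
    (k : Type) [Field k] (I A : Type) (s t : A → I)
    (V W : QuivRep k I A s t) (I' : Set I)
    (X : I → Type) [∀ i, AddCommGroup (X i)] [∀ i, Module k (X i)]
    (f : ∀ i, V.M i →ₗ[k] X i) (g : ∀ i, X i →ₗ[k] W.M i)
    (ξ : ∀ a, X (s a) →ₗ[k] X (t a))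
    (hses : ∀ i ∈ I', Function.Injective (f i) ∧ Function.Surjective (g i) ∧
      LinearMap.range (f i) = LinearMap.ker (g i))
    (hcomm : ∀ a, s a ∈ I' → t a ∈ I' →
      (ξ a).comp (f (s a)) = (f (t a)).comp (V.map a) ∧
      (g (t a)).comp (ξ a) = (W.map a).comp (g (s a))) :
    ∃ (Y : QuivRep k I A s t) (F : ∀ i, V.M i →ₗ[k] Y.M i)
      (G : ∀ i, Y.M i →ₗ[k] W.M i),
      (∀ i, Function.Injective (F i) ∧ Function.Surjective (G i) ∧
        LinearMap.range (F i) = LinearMap.ker (G i)) ∧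
      (∀ a, (Y.map a).comp (F (s a)) = (F (t a)).comp (V.map a) ∧
        (G (t a)).comp (Y.map a) = (W.map a).comp (G (s a))) ∧
      ∃ e : ∀ i, i ∈ I' → (Y.M i ≃ₗ[k] X i),
        (∀ i (h : i ∈ I'),
          (e i h).toLinearMap.comp (F i) = f i ∧
          (g i).comp (e i h).toLinearMap = G i) ∧
        (∀ a (hs : s a ∈ I') (ht : t a ∈ I'),
          (ξ a).comp (e (s a) hs).toLinearMap =
            (e (t a) ht).toLinearMap.comp (Y.map a)) := by
  choose e he using fun i (hi : i ∈ I') =>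
    exists_prodEquiv_of_shortExact (hses i hi).1 (hses i hi).2.1 (hses i hi).2.2
  let η a (hs : s a ∈ I') (ht : t a ∈ I') :=
    (e (t a) ht).symm.toLinearMap ∘ₗ ξ a ∘ₗ (e (s a) hs).toLinearMap
  refine ⟨V.prodGlue W I' η, fun i => inl k _ _, fun i => snd k _ _,
    fun i => ⟨inl_injective, Prod.snd_surjective, range_inl k _ _⟩,
    V.prodGlue_map_comp_inl_and_snd_comp_map W I' η fun a hs ht =>
      conj_comp_inl_and_snd_comp_conj _ _ (he _ hs) (he _ ht) (hcomm a hs ht),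
    e, he, fun a hs ht => ?_⟩
  rw [V.prodGlue_map_of_mem W I' η hs ht]
  exact ((LinearEquiv.eq_toLinearMap_symm_comp _ _).1 rfl).symm

/-- any extension of `W|_{I'}` by `V|_{I'}` over the full subquiver on a
vertex subset `I'` extends to an extension of `W` by `V` over the whole quiver; i.e.
the restriction map `Ext¹(W,V) → Ext¹(W|_{I'},V|_{I'})` is surjective. -/
theorem stmt6
    (k : Type) [Field k] (I A : Type) [Fintype I] [Fintype A] (s t : A → I)
    (V W : QuivRep k I A s t) (I' : Set I)
    (X : I → Type) [∀ i, AddCommGroup (X i)] [∀ i, Module k (X i)]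
    [∀ i, FiniteDimensional k (X i)]
    (f : ∀ i, V.M i →ₗ[k] X i) (g : ∀ i, X i →ₗ[k] W.M i)
    (ξ : ∀ a, X (s a) →ₗ[k] X (t a))
    (hses : ∀ i ∈ I', Function.Injective (f i) ∧ Function.Surjective (g i) ∧
      LinearMap.range (f i) = LinearMap.ker (g i))
    (hcomm : ∀ a, s a ∈ I' → t a ∈ I' →
      (ξ a).comp (f (s a)) = (f (t a)).comp (V.map a) ∧
      (g (t a)).comp (ξ a) = (W.map a).comp (g (s a))) :
    ∃ (Y : QuivRep k I A s t) (F : ∀ i, V.M i →ₗ[k] Y.M i)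
      (G : ∀ i, Y.M i →ₗ[k] W.M i),
      (∀ i, Function.Injective (F i) ∧ Function.Surjective (G i) ∧
        LinearMap.range (F i) = LinearMap.ker (G i)) ∧
      (∀ a, (Y.map a).comp (F (s a)) = (F (t a)).comp (V.map a) ∧
        (G (t a)).comp (Y.map a) = (W.map a).comp (G (s a))) ∧
      ∃ e : ∀ i, i ∈ I' → (Y.M i ≃ₗ[k] X i),
        (∀ i (h : i ∈ I'),
          (e i h).toLinearMap.comp (F i) = f i ∧
          (g i).comp (e i h).toLinearMap = G i) ∧
        (∀ a (hs : s a ∈ I') (ht : t a ∈ I'),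
          (ξ a).comp (e (s a) hs).toLinearMap =
            (e (t a) ht).toLinearMap.comp (Y.map a)) :=
  stmt6_general k I A s t V W I' X f g ξ hses hcomm

end ADEShuffle
end
end

section
/- For every convex lattice path p of size (n,d), all but finitely many convex lattice paths of size (n,d) lie below p; that is, the set of convex lattice paths of size (n,d) that do not lie below p is finite. -/
/-! Every vertex of a convex path lies on or above each of its segment lines; comparing the
segment line through vertex `m` with the endpoints `(0, 0)` and `(n, d)` bounds all vertex
heights by `max 0 d`. If `q` has a vertex at height at most `p.lowBound`, the least value of
the first and last segment lines of `p` on `[0, n]`, then each segment line of `q`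
passes below `(0, 0)`, `(n, d)` and that vertex, so on the left of the vertex it stays below
the first segment line of `p` and on the right below the last one; hence `q` lies below `p`.
So the paths not lying below `p` have all vertices in a finite box, and there are finitely
many of them. -/

noncomputable section

namespace ADEShuffle

/-- A convex lattice path of size `(n,d)`: a sequence of lattice points
`P 0 = (0,0), P 1, …, P t = (n,d)` with strictly increasing first coordinates and
strictly increasing slopes of consecutive segments. (The values `P m` for `m > t`
are normalized to equal `P t`, so that a path is uniquely represented.) -/
structure ConvexPath (n : ℕ) (d : ℤ) where
  t : ℕ
  P : ℕ → ℤ × ℤ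
  first : P 0 = (0, 0)
  last : P t = ((n : ℤ), d)
  tail : ∀ m, t ≤ m → P m = P t
  mono : ∀ m, m < t → (P m).1 < (P (m + 1)).1
  convex : ∀ m, m + 2 ≤ t →
    ((P (m + 1)).2 - (P m).2) * ((P (m + 2)).1 - (P (m + 1)).1) <
    ((P (m + 2)).2 - (P (m + 1)).2) * ((P (m + 1)).1 - (P m).1)

/-- The graph of a convex lattice path: the continuous piecewise-linear function
interpolating its vertices. On `[0,n]` it equals the supremum of the affine functions
determined by the segments of the path (since the slopes strictly increase). -/
def ConvexPath.graph {n : ℕ} {d : ℤ} (p : ConvexPath n d) (x : ℝ) : ℝ :=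
  ⨆ m : Fin p.t,
    (((p.P m.1).2 : ℝ) + (x - ((p.P m.1).1 : ℝ)) *
      ((((p.P (m.1 + 1)).2 : ℝ) - ((p.P m.1).2 : ℝ)) /
        (((p.P (m.1 + 1)).1 : ℝ) - ((p.P m.1).1 : ℝ))))

/-- `p` lies below `p'` if its graph is pointwise `≤` that of `p'` on `[0,n]`. -/
def ConvexPath.LiesBelow {n : ℕ} {d : ℤ} (p p' : ConvexPath n d) : Prop :=
  ∀ x ∈ Set.Icc (0 : ℝ) (n : ℝ), p.graph x ≤ p'.graph x

lemma add_sub_mul_le_of_le_of_le {a b s a' b' s' u v x : ℝ}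
    (hu : a + (u - b) * s ≤ a' + (u - b') * s') (hv : a + (v - b) * s ≤ a' + (v - b') * s')
    (hux : u ≤ x) (hxv : x ≤ v) : a + (x - b) * s ≤ a' + (x - b') * s' := by
  rcases le_total s s' with h | h
  · nlinarith [mul_nonpos_of_nonneg_of_nonpos (sub_nonneg.2 hux) (sub_nonpos.2 h)]
  · nlinarith [mul_nonpos_of_nonneg_of_nonpos (sub_nonneg.2 hxv) (sub_nonpos.2 h)]

namespace ConvexPath

variable {n : ℕ} {d : ℤ} (q : ConvexPath n d)

def X (m : ℕ) : ℝ := ((q.P m).1 : ℝ)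

def Y (m : ℕ) : ℝ := ((q.P m).2 : ℝ)

def slope (m : ℕ) : ℝ := (q.Y (m + 1) - q.Y m) / (q.X (m + 1) - q.X m)

def line (m : ℕ) (x : ℝ) : ℝ := q.Y m + (x - q.X m) * q.slope m

lemma P_of_t_le {m : ℕ} (hm : q.t ≤ m) : q.P m = ((n : ℤ), d) := (q.tail m hm).trans q.last

lemma X_zero : q.X 0 = 0 := by simp [X, q.first]

lemma Y_zero : q.Y 0 = 0 := by simp [Y, q.first]

lemma X_of_t_le {m : ℕ} (hm : q.t ≤ m) : q.X m = n := by simp [X, q.P_of_t_le hm]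

lemma Y_of_t_le {m : ℕ} (hm : q.t ≤ m) : q.Y m = d := by simp [Y, q.P_of_t_le hm]

lemma fst_le_fst {i j : ℕ} (hij : i ≤ j) (hj : j ≤ q.t) : (q.P i).1 ≤ (q.P j).1 := by
  induction j, hij using Nat.le_induction with
  | base => rfl
  | succ j _ ih => exact (ih (by omega)).trans (q.mono j (by omega)).le

lemma fst_mem_Icc (m : ℕ) : (q.P m).1 ∈ Set.Icc 0 (n : ℤ) := by
  rcases le_or_gt m q.t with hm | hm
  · constructor
    · simpa [q.first] using q.fst_le_fst (Nat.zero_le m) hm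
    · simpa [q.last] using q.fst_le_fst hm le_rfl
  · simp [q.P_of_t_le hm.le]

lemma X_mem_Icc (m : ℕ) : q.X m ∈ Set.Icc 0 (n : ℝ) := by
  obtain ⟨h0, hn⟩ := q.fst_mem_Icc m
  exact ⟨by simpa [X] using h0, by simpa [X] using (Int.cast_le (R := ℝ)).2 hn⟩

lemma le_fst {m : ℕ} (hm : m ≤ q.t) : (m : ℤ) ≤ (q.P m).1 := by
  induction m with
  | zero => simp [q.first]
  | succ m ih =>
    have := q.mono m (by omega)
    push_cast
    linarith [ih (by omega)]

lemma t_le : q.t ≤ n := by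
  have : (q.t : ℤ) ≤ n := by simpa [q.last] using q.le_fst le_rfl
  exact_mod_cast this

lemma t_pos (hn : 1 ≤ n) : 0 < q.t := by
  by_contra! h
  have := q.last
  rw [Nat.le_zero.1 h, q.first, Prod.mk.injEq] at this
  omega

lemma X_lt_X_succ {m : ℕ} (hm : m < q.t) : q.X m < q.X (m + 1) := by
  simpa [X] using q.mono m hm

lemma slope_mul_sub {m : ℕ} (hm : m < q.t) :
    q.slope m * (q.X (m + 1) - q.X m) = q.Y (m + 1) - q.Y m :=
  div_mul_cancel₀ _ (sub_pos.2 (q.X_lt_X_succ hm)).ne'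

lemma slope_lt_slope_succ {m : ℕ} (hm : m + 2 ≤ q.t) : q.slope m < q.slope (m + 1) := by
  rw [slope, slope, div_lt_div_iff₀ (sub_pos.2 (q.X_lt_X_succ (by omega)))
    (sub_pos.2 (q.X_lt_X_succ (by omega)))]
  simpa [X, Y] using (Int.cast_lt (R := ℝ)).2 (q.convex m hm)

lemma slope_le_slope {i j : ℕ} (hij : i ≤ j) (hj : j < q.t) : q.slope i ≤ q.slope j := by
  induction j, hij using Nat.le_induction with
  | base => rfl
  | succ j _ ih => exact (ih (by omega)).trans (q.slope_lt_slope_succ (by omega)).le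

lemma line_sub_line (m : ℕ) (x z : ℝ) : q.line m x - q.line m z = (x - z) * q.slope m := by
  simp only [line]; ring

lemma line_X_self (m : ℕ) : q.line m (q.X m) = q.Y m := by simp [line]

lemma line_X_succ {m : ℕ} (hm : m < q.t) : q.line m (q.X (m + 1)) = q.Y (m + 1) := by
  linarith [q.line_sub_line m (q.X (m + 1)) (q.X m), q.line_X_self m, q.slope_mul_sub hm]

lemma height_succ (m : ℕ) {k : ℕ} (hk : k < q.t) :
    q.Y (k + 1) - q.line m (q.X (k + 1)) =
      q.Y k - q.line m (q.X k) + (q.slope k - q.slope m) * (q.X (k + 1) - q.X k) := by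
  linarith [q.line_sub_line m (q.X (k + 1)) (q.X k), q.slope_mul_sub hk]

lemma line_le_Y {m : ℕ} (hm : m < q.t) (k : ℕ) : q.line m (q.X k) ≤ q.Y k := by
  wlog hk : k ≤ q.t generalizing k
  · simpa [q.X_of_t_le (le_of_not_ge hk), q.Y_of_t_le (le_of_not_ge hk),
      q.X_of_t_le le_rfl, q.Y_of_t_le le_rfl] using this q.t le_rfl
  rcases le_total m k with hmk | hkm
  · induction k, hmk using Nat.le_induction with
    | base => rw [q.line_X_self]
    | succ k hmk ih =>
      have := mul_nonneg (sub_nonneg.2 (q.slope_le_slope hmk (by omega)))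
        (sub_pos.2 (q.X_lt_X_succ (m := k) (by omega))).le
      linarith [q.height_succ m (k := k) (by omega), ih (by omega)]
  · induction hkm using Nat.decreasingInduction with
    | self => rw [q.line_X_self]
    | of_succ k hkm ih =>
      have := mul_nonneg (sub_nonneg.2 (q.slope_le_slope hkm.le hm))
        (sub_pos.2 (q.X_lt_X_succ (m := k) (by omega))).le
      linarith [q.height_succ m (k := k) (by omega), ih (by omega)]

lemma line_zero_le {m : ℕ} (hm : m < q.t) : q.line m 0 ≤ 0 := by
  simpa [q.X_zero, q.Y_zero] using q.line_le_Y hm 0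

lemma line_n_le {m : ℕ} (hm : m < q.t) : q.line m n ≤ d := by
  simpa [q.X_of_t_le le_rfl, q.Y_of_t_le le_rfl] using q.line_le_Y hm q.t

lemma line_zero_zero : q.line 0 0 = 0 := by
  simpa [q.X_zero, q.Y_zero] using q.line_X_self 0

lemma line_pred_t_n (ht : 0 < q.t) : q.line (q.t - 1) n = d := by
  have := q.line_X_succ (m := q.t - 1) (by omega)
  rwa [Nat.sub_add_cancel ht, q.X_of_t_le le_rfl, q.Y_of_t_le le_rfl] at this

lemma min_le_line (m : ℕ) {u v x : ℝ} (hx : x ∈ Set.Icc u v) :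
    min (q.line m u) (q.line m v) ≤ q.line m x := by
  have hxu := q.line_sub_line m x u
  have hvx := q.line_sub_line m v x
  rcases le_total 0 (q.slope m) with h | h
  · exact min_le_of_left_le (by nlinarith [hx.1])
  · exact min_le_of_right_le (by nlinarith [hx.2])

lemma line_le_max (m : ℕ) {u v x : ℝ} (hx : x ∈ Set.Icc u v) :
    q.line m x ≤ max (q.line m u) (q.line m v) := by
  have hxu := q.line_sub_line m x u
  have hvx := q.line_sub_line m v x
  rcases le_total 0 (q.slope m) with h | h
  · exact le_max_of_le_right (by nlinarith [hx.2])
  · exact le_max_of_le_left (by nlinarith [hx.1])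

lemma line_le_line {d' : ℤ} (p : ConvexPath n d') {m j : ℕ} {u v x : ℝ}
    (hu : q.line m u ≤ p.line j u) (hv : q.line m v ≤ p.line j v) (hx : x ∈ Set.Icc u v) :
    q.line m x ≤ p.line j x :=
  add_sub_mul_le_of_le_of_le hu hv hx.1 hx.2

lemma line_le_graph {j : ℕ} (hj : j < q.t) (x : ℝ) : q.line j x ≤ q.graph x :=
  le_ciSup (f := fun m : Fin q.t => q.line m x) (Set.finite_range _).bddAbove ⟨j, hj⟩

lemma graph_le (ht : 0 < q.t) {x c : ℝ} (h : ∀ m < q.t, q.line m x ≤ c) : q.graph x ≤ c :=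
  have : Nonempty (Fin q.t) := ⟨⟨0, ht⟩⟩
  ciSup_le fun m => h m m.2

lemma snd_le_abs (m : ℕ) : (q.P m).2 ≤ |d| := by
  suffices h : q.Y m ≤ max 0 (d : ℝ) by
    have : ((q.P m).2 : ℝ) ≤ ((max 0 d : ℤ) : ℝ) := by rwa [Int.cast_max, Int.cast_zero]
    exact (Int.cast_le.1 this).trans (max_le (abs_nonneg d) (le_abs_self d))
  rcases lt_or_ge m q.t with hm | hm
  · rw [← q.line_X_self m]
    exact (q.line_le_max m (q.X_mem_Icc m)).trans
      (max_le_max (q.line_zero_le hm) (q.line_n_le hm))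
  · exact (q.Y_of_t_le hm).trans_le (le_max_right _ _)

def lowBound : ℝ :=
  min (min (q.line 0 0) (q.line 0 n)) (min (q.line (q.t - 1) 0) (q.line (q.t - 1) n))

lemma lowBound_le_line_zero {x : ℝ} (hx : x ∈ Set.Icc 0 (n : ℝ)) : q.lowBound ≤ q.line 0 x :=
  (min_le_left _ _).trans (q.min_le_line 0 hx)

lemma lowBound_le_line_pred_t {x : ℝ} (hx : x ∈ Set.Icc 0 (n : ℝ)) :
    q.lowBound ≤ q.line (q.t - 1) x :=
  (min_le_right _ _).trans (q.min_le_line _ hx)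

lemma liesBelow_of_Y_le_lowBound (hn : 1 ≤ n) (p : ConvexPath n d) {k : ℕ}
    (hk : q.Y k ≤ p.lowBound) : q.LiesBelow p := by
  intro x hx
  have hp := p.t_pos hn
  refine q.graph_le (q.t_pos hn) fun m hm => ?_
  have ha := q.X_mem_Icc k
  have hlow : q.line m (q.X k) ≤ p.lowBound := (q.line_le_Y hm k).trans hk
  rcases le_total x (q.X k) with hxa | hax
  · refine (q.line_le_line p (u := 0) (v := q.X k) ?_ ?_ ⟨hx.1, hxa⟩).trans (p.line_le_graph hp x)
    · rw [p.line_zero_zero]; exact q.line_zero_le hm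
    · exact hlow.trans (p.lowBound_le_line_zero ha)
  · refine (q.line_le_line p (j := p.t - 1) (u := q.X k) (v := n) ?_ ?_ ⟨hax, hx.2⟩).trans
      (p.line_le_graph (by omega) x)
    · exact hlow.trans (p.lowBound_le_line_pred_t ha)
    · rw [p.line_pred_t_n hp]; exact q.line_n_le hm

lemma eq_of_t_eq_of_P_eq {q q' : ConvexPath n d} (ht : q.t = q'.t)
    (hP : ∀ m ≤ n, q.P m = q'.P m) : q = q' := by
  have hP' : q.P = q'.P := funext fun m => (le_or_gt m n).elim (hP m) fun h => by
    rw [q.P_of_t_le (by linarith [q.t_le]), q'.P_of_t_le (by linarith [q'.t_le])]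
  obtain ⟨t, P, _⟩ := q
  obtain ⟨t', P', _⟩ := q'
  simp only [mk.injEq]
  exact ⟨ht, hP'⟩

lemma finite_setOf_forall_P_mem {S : Set (ℤ × ℤ)} (hS : S.Finite) :
    {q : ConvexPath n d | ∀ m, q.P m ∈ S}.Finite := by
  let f : ConvexPath n d → ℕ × (Fin (n + 1) → ℤ × ℤ) := fun q => (q.t, fun i => q.P i)
  have hf : f.Injective := fun q q' h =>
    eq_of_t_eq_of_P_eq (congrArg Prod.fst h) fun m hm =>
      congrFun (congrArg Prod.snd h) ⟨m, by omega⟩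
  refine (((Set.finite_Iic n).prod (Set.Finite.pi fun _ => hS)).preimage hf.injOn).subset ?_
  exact fun q hq => ⟨q.t_le, fun i _ => hq i⟩

end ConvexPath

/-- all but finitely many convex lattice paths of size `(n,d)` lie below
any given convex lattice path `p` of size `(n,d)`. -/
theorem stmt7 (n : ℕ) (hn : 1 ≤ n) (d : ℤ) (p : ConvexPath n d) :
    {q : ConvexPath n d | ¬ q.LiesBelow p}.Finite := by
  have hbox := (Set.finite_Icc 0 (n : ℤ)).prod (Set.finite_Icc ⌊p.lowBound⌋ |d|)
  refine (ConvexPath.finite_setOf_forall_P_mem hbox).subset fun q hq m =>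
    ⟨q.fst_mem_Icc m, ?_, q.snd_le_abs m⟩
  by_contra! h
  exact hq (q.liesBelow_of_Y_le_lowBound hn p (k := m)
    ((Int.cast_lt.2 h).le.trans (Int.floor_le _)))

end ADEShuffle
end
end

section
/- Let k ∈ ℕ^I and let r be a color-symmetric Laurent polynomial in the variables z_{i,b} such that for every ordered pair (i,j) of distinct non-adjacent vertices of Q with k_i ≥ 1 and k_j ≥ 1, r vanishes under the substitution z_{i,1} = z_{j,1} (these are the wheel conditions of the shuffle algebra for pairs of colors with a_{ij} = 0). Then r is divisible, in the Laurent polynomial ring, by ∏ over unordered pairs {i,j} of distinct non-adjacent vertices of ∏_{1≤b≤k_i, 1≤c≤k_j} (z_{i,b} − z_{j,c}). -/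
noncomputable section

namespace ADEShuffle

/-- The field `ℚ(q)`. -/
abbrev Fq : Type := RatFunc ℚ

/-- The variable `q`. -/
def qvar : Fq := RatFunc.X

/-- The index set of the variables `z_{i,b}`, `i ∈ I`, `1 ≤ b ≤ k_i`. -/
abbrev Vars (I : Type) (k : I → ℕ) : Type := Σ i : I, Fin (k i)

/-- Laurent polynomials over `ℚ(q)` in the variables `z_{i,b}`, encoded as finitely
supported functions on exponent vectors (the group algebra of `ℤ^{Vars}`). -/
abbrev LaurentPoly (I : Type) (k : I → ℕ) : Type := AddMonoidAlgebra Fq ((Vars I k) →₀ ℤ)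

/-- Evaluation of a Laurent polynomial at a point `z : Vars I k → ℚ(q)`. -/
def evalLaurent {I : Type} [Fintype I] {k : I → ℕ} (r : LaurentPoly I k)
    (z : Vars I k → Fq) : Fq :=
  ∑ e ∈ r.coeff.support, r.coeff e * ∏ sv, z sv ^ (e sv)

/-- Two distinct vertices are adjacent if some arrow joins them (in either direction). -/
abbrev Adjacent {I A : Type} (s t : A → I) (i j : I) : Prop :=
  ∃ a, (s a = i ∧ t a = j) ∨ (s a = j ∧ t a = i)

/-- A Laurent polynomial is color-symmetric if it is invariant under all permutations
of the variables preserving the color `i` (expressed via evaluations at points all of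
whose coordinates are nonzero, which determine the Laurent polynomial). -/
def ColorSym {I : Type} [Fintype I] {k : I → ℕ} (r : LaurentPoly I k) : Prop :=
  ∀ e : Vars I k ≃ Vars I k, (∀ sv : Vars I k, (e sv).1 = sv.1) →
    ∀ z : Vars I k → Fq, (∀ sv, z sv ≠ 0) →
      evalLaurent r (z ∘ e) = evalLaurent r z

/-- The Laurent polynomial `z_{i,b}` (one of the variables). -/
def zVar {I : Type} (k : I → ℕ) (sv : Vars I k) : LaurentPoly I k :=
  AddMonoidAlgebra.single (Finsupp.single sv 1) 1

/-!
Write `K[σ →₀ ℤ]` for the Laurent polynomials over a field `K` in variables `z_v`, `v ∈ σ`.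
For `u ≠ v`, `z_u - z_v` generates the kernel of the substitution `z_u ↦ z_v`, whose target is a
domain, so it is prime. When `K` has characteristic zero, a Laurent polynomial is determined by its
values at points with unit coordinates (monomials are distinct characters of `(σ → Kˣ)`, hence
linearly independent), so a Laurent polynomial vanishing wherever `z_u = z_v` lies in that kernel.
For `r` as in the theorem, color symmetry turns the wheel condition at `z_{i,1} = z_{j,1}` into
vanishing at every `z_{i,b} = z_{j,c}`. The factors `z_{i,b} - z_{j,c}` with `i < j` are pairwise
non-associate primes dividing `r`, so their product divides `r`.
-/

open Finset AddMonoidAlgebra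

lemma sigma_fst_swap_apply {ι : Type*} {α : ι → Type*} [DecidableEq (Σ i, α i)] {a b : Σ i, α i}
    (h : a.1 = b.1) (x : Σ i, α i) : (Equiv.swap a b x).1 = x.1 := by
  rcases eq_or_ne x a with rfl | hxa
  · rw [Equiv.swap_apply_left, h]
  rcases eq_or_ne x b with rfl | hxb
  · rw [Equiv.swap_apply_right, h]
  rw [Equiv.swap_apply_of_ne_of_ne hxa hxb]

lemma prod_dvd_of_prime_of_not_dvd {ι M : Type*} [CommMonoidWithZero M]
    {s : Finset ι} {f : ι → M} {n : M} (hp : ∀ i ∈ s, Prime (f i))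
    (hs : (s : Set ι).Pairwise fun i j => ¬ f i ∣ f j) (h : ∀ i ∈ s, f i ∣ n) :
    ∏ i ∈ s, f i ∣ n := by
  classical
  induction s using Finset.induction_on generalizing n with
  | empty => simp
  | insert i s hi ih =>
    obtain ⟨m, rfl⟩ := h i (mem_insert_self i s)
    rw [prod_insert hi]
    refine mul_dvd_mul_left _ (ih (fun j hj => hp j (mem_insert_of_mem hj))
      (hs.mono (by simp)) fun j hj => ?_)
    have hji : i ≠ j := fun hij => hi (hij ▸ hj)
    exact ((hp j (mem_insert_of_mem hj)).dvd_or_dvd (h j (mem_insert_of_mem hj))).resolve_left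
      (hs (mem_insert_of_mem hj) (mem_insert_self i s) hji.symm)

lemma prod_ite_prod_prod_eq_prod_filter {ι M : Type*} {α : ι → Type*} [Fintype ι]
    [∀ i, Fintype (α i)] [CommMonoid M] (p : ι → ι → Prop) [∀ i j, Decidable (p i j)]
    (f : Sigma α → Sigma α → M) :
    (∏ i, ∏ j, if p i j then ∏ b, ∏ c, f ⟨i, b⟩ ⟨j, c⟩ else 1) =
      ∏ x ∈ univ.filter (fun x : Sigma α × Sigma α => p x.1.1 x.2.1), f x.1 x.2 := by
  simp_rw [prod_filter, Fintype.prod_prod_type, Fintype.prod_sigma]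
  refine Fintype.prod_congr _ _ fun i => ?_
  rw [prod_comm]
  refine Fintype.prod_congr _ _ fun j => ?_
  split_ifs <;> simp

section LaurentAlgebra

variable {K σ τ : Type*} [Field K]

def laurentVar (v : σ) : K[σ →₀ ℤ] := single (Finsupp.single v 1) 1

def monomialChar (z : σ → Kˣ) : Multiplicative (σ →₀ ℤ) →* Kˣ where
  toFun e := e.toAdd.prod fun v n => z v ^ n
  map_one' := Finsupp.prod_zero_index
  map_mul' _ _ := Finsupp.prod_add_index' (fun _ => zpow_zero _) fun _ _ _ => zpow_add _ _ _

def evalUnits (z : σ → Kˣ) : K[σ →₀ ℤ] →ₐ[K] K :=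
  lift K K (σ →₀ ℤ) ((Units.coeHom K).comp (monomialChar z))

lemma evalUnits_single (z : σ → Kˣ) (e : σ →₀ ℤ) (c : K) :
    evalUnits z (single e c) = c * (e.prod fun v n => z v ^ n : Kˣ) := by
  simp [evalUnits, monomialChar]

lemma evalUnits_laurentVar (z : σ → Kˣ) (v : σ) : evalUnits z (laurentVar v) = z v := by
  simp [laurentVar, evalUnits_single]

def renameVars (f : σ → τ) : K[σ →₀ ℤ] →ₐ[K] K[τ →₀ ℤ] :=
  mapDomainAlgHom K K (Finsupp.mapDomain.addMonoidHom f)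

lemma renameVars_laurentVar (f : σ → τ) (v : σ) :
    renameVars f (laurentVar v : K[σ →₀ ℤ]) = laurentVar (f v) := by
  simp [renameVars, laurentVar]

lemma evalUnits_comp_renameVars (f : σ → τ) (z : τ → Kˣ) :
    (evalUnits z).comp (renameVars f) = evalUnits (z ∘ f) := by
  refine algHom_ext (fun e => ?_) (Subsingleton.elim _ _)
  simp [renameVars, evalUnits_single, Finsupp.prod_mapDomain_index, zpow_add]

lemma algHom_ext_laurentVar {B : Type*} [Semiring B] [Algebra K B]
    ⦃φ₁ φ₂ : K[σ →₀ ℤ] →ₐ[K] B⦄ (h : ∀ v, φ₁ (laurentVar v) = φ₂ (laurentVar v)) :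
    φ₁ = φ₂ := by
  refine algHom_ext (fun e => ?_) (Subsingleton.elim _ _)
  induction e using Finsupp.induction_linear with
  | zero => simp only [← one_def, map_one]
  | add e e' he he' => rw [← mul_one 1, ← single_mul_single, map_mul, map_mul, he, he']
  | single v n =>
    let X : (K[σ →₀ ℤ])ˣ := (of K (σ →₀ ℤ)).toHomUnits (.ofAdd (Finsupp.single v 1))
    have hX : (single (Finsupp.single v n) 1 : K[σ →₀ ℤ]) = ↑(X ^ n) := by
      rw [← map_zpow, ← ofAdd_zsmul, Finsupp.smul_single_one]; rfl
    have hφ : Units.map φ₁.toMonoidHom X = Units.map φ₂.toMonoidHom X := Units.ext (h v)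
    simpa [hX, ← map_zpow] using congrArg (fun x => ((x ^ n : Bˣ) : B)) hφ

lemma ker_renameVars_update [DecidableEq σ] {u v : σ} (huv : u ≠ v) :
    RingHom.ker (renameVars (K := K) (Function.update id u v)) =
      Ideal.span {laurentVar u - laurentVar v} := by
  set I := Ideal.span {(laurentVar u - laurentVar v : K[σ →₀ ℤ])}
  refine le_antisymm (fun r hr => ?_) ?_
  · have hmk : (Ideal.Quotient.mkₐ K I).comp (renameVars (Function.update id u v)) =
        Ideal.Quotient.mkₐ K I := by
      refine algHom_ext_laurentVar fun w => ?_
      rcases eq_or_ne w u with rfl | hw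
      · simp only [AlgHom.comp_apply, renameVars_laurentVar, Function.update_self,
          Ideal.Quotient.mkₐ_eq_mk, Ideal.Quotient.eq]
        rw [← neg_sub]
        exact I.neg_mem (Ideal.mem_span_singleton_self _)
      · simp [renameVars_laurentVar, hw]
    have := congrArg (· r) hmk
    simp only [AlgHom.comp_apply, Ideal.Quotient.mkₐ_eq_mk, RingHom.mem_ker.1 hr, map_zero] at this
    exact Ideal.Quotient.eq_zero_iff_mem.1 this.symm
  · rw [Ideal.span_le, Set.singleton_subset_iff, SetLike.mem_coe, RingHom.mem_ker]
    simp [renameVars_laurentVar, huv.symm]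

lemma laurentVar_sub_ne_zero {u v : σ} (huv : u ≠ v) :
    (laurentVar u - laurentVar v : K[σ →₀ ℤ]) ≠ 0 := by
  intro h
  have := congrArg (fun r : K[σ →₀ ℤ] => r.coeff (Finsupp.single u 1)) h
  simp [laurentVar, Finsupp.single_left_inj, huv.symm] at this

lemma prime_laurentVar_sub {u v : σ} (huv : u ≠ v) :
    Prime (laurentVar u - laurentVar v : K[σ →₀ ℤ]) := by
  classical
  rw [← Ideal.span_singleton_prime (laurentVar_sub_ne_zero huv), ← ker_renameVars_update huv]
  exact RingHom.ker_isPrime _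

lemma monomialChar_mulSingle [DecidableEq σ] (v : σ) (t : Kˣ) (e : σ →₀ ℤ) :
    monomialChar (Pi.mulSingle v t) (.ofAdd e) = t ^ e v := by
  refine (Finsupp.prod_eq_single v (fun w _ hw => ?_) fun _ => zpow_zero _).trans ?_
  · simp [Pi.mulSingle_eq_of_ne hw]
  · simp

def monomialEval (e : σ →₀ ℤ) : (σ → Kˣ) →* K where
  toFun z := monomialChar z (.ofAdd e)
  map_one' := by simp [monomialChar]
  map_mul' z z' := by simp [monomialChar, mul_zpow, Finsupp.prod_mul]

lemma monomialEval_apply (e : σ →₀ ℤ) (z : σ → Kˣ) :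
    monomialEval e z = monomialChar z (.ofAdd e) := rfl

lemma zpow_two_injective [CharZero K] : Function.Injective fun n : ℤ => (2 : K) ^ n := by
  intro m n h
  have : ((2 ^ m : ℚ) : K) = ((2 ^ n : ℚ) : K) := by push_cast; exact h
  exact zpow_right_injective₀ (by norm_num : (0 : ℚ) < 2) (by norm_num) (Rat.cast_injective this)

lemma monomialEval_injective [CharZero K] :
    Function.Injective (monomialEval (K := K) (σ := σ)) := by
  classical
  intro e e' h
  ext v
  apply zpow_two_injective (K := K)
  simpa [monomialEval_apply, monomialChar_mulSingle] using
    DFunLike.congr_fun h (Pi.mulSingle v (Units.mk0 2 two_ne_zero))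

lemma eq_zero_of_forall_evalUnits_eq_zero [CharZero K] {r : K[σ →₀ ℤ]}
    (h : ∀ z, evalUnits z r = 0) : r = 0 := by
  have hli := (linearIndependent_monoidHom (σ → Kˣ) K).comp _ monomialEval_injective
  ext e
  refine DFunLike.congr_fun (linearIndependent_iff.1 hli r.coeff (funext fun z => ?_)) e
  have := h z
  rw [evalUnits, lift_apply] at this
  simp only [Finsupp.linearCombination_apply, Finsupp.sum, Finset.sum_apply, Pi.smul_apply,
    Function.comp_apply, monomialEval_apply, Pi.zero_apply]
  simpa [Finsupp.sum] using this

lemma laurentVar_sub_dvd_of_evalUnits_eq_zero [CharZero K] {u v : σ} (huv : u ≠ v)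
    {r : K[σ →₀ ℤ]} (h : ∀ z : σ → Kˣ, z u = z v → evalUnits z r = 0) :
    laurentVar u - laurentVar v ∣ r := by
  classical
  rw [← Ideal.mem_span_singleton, ← ker_renameVars_update huv, RingHom.mem_ker]
  refine eq_zero_of_forall_evalUnits_eq_zero fun z => ?_
  rw [← AlgHom.comp_apply, evalUnits_comp_renameVars, Function.comp_update, Function.comp_id]
  exact h _ (by rw [Function.update_self, Function.update_of_ne huv.symm])

lemma eq_or_eq_of_laurentVar_sub_dvd [CharZero K] {u v w w' : σ} (hw : w ≠ w')
    (h : (laurentVar u - laurentVar v : K[σ →₀ ℤ]) ∣ laurentVar w - laurentVar w') :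
    w = u ∨ w = v := by
  classical
  by_contra! hne
  obtain ⟨c, hc⟩ := h
  have := congrArg (evalUnits (Pi.mulSingle w (Units.mk0 2 two_ne_zero))) hc
  norm_num [evalUnits_laurentVar, Pi.mulSingle_eq_of_ne, hne.1.symm, hne.2.symm, hw.symm] at this

lemma eq_of_laurentVar_sub_dvd {κ : Type*} [Preorder κ] [CharZero K] (c : σ → κ)
    {x y : σ × σ} (hx : c x.1 < c x.2) (hy : c y.1 < c y.2)
    (h : (laurentVar x.1 - laurentVar x.2 : K[σ →₀ ℤ]) ∣ laurentVar y.1 - laurentVar y.2) :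
    x = y := by
  obtain ⟨a, b⟩ := x
  obtain ⟨a', b'⟩ := y
  have hy' : a' ≠ b' := ne_of_apply_ne c hy.ne
  have h₁ := eq_or_eq_of_laurentVar_sub_dvd hy' h
  have h₂ := eq_or_eq_of_laurentVar_sub_dvd hy'.symm (by simpa only [neg_sub] using h.neg_right)
  rcases h₁ with rfl | rfl <;> rcases h₂ with rfl | rfl
  · exact absurd hy (lt_irrefl _)
  · rfl
  · exact absurd hx hy.asymm
  · exact absurd hy (lt_irrefl _)

end LaurentAlgebra

section ColorSymmetric

variable {I : Type} [Fintype I] {k : I → ℕ}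

lemma evalLaurent_eq_evalUnits (r : LaurentPoly I k) (z : Vars I k → Fqˣ) :
    evalLaurent r (fun v => z v) = evalUnits z r := by
  simp [evalLaurent, evalUnits, lift_apply, monomialChar, Finsupp.sum, Finsupp.prod_fintype]

lemma ColorSym.evalLaurent_eq_zero {r : LaurentPoly I k} (hsym : ColorSym r)
    {u v : Vars I k} (huv : u.1 ≠ v.1)
    (h : ∀ z : Vars I k → Fq, (∀ w, z w ≠ 0) →
      z ⟨u.1, ⟨0, u.2.pos⟩⟩ = z ⟨v.1, ⟨0, v.2.pos⟩⟩ → evalLaurent r z = 0)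
    {z : Vars I k → Fq} (hz : ∀ w, z w ≠ 0) (hzuv : z u = z v) : evalLaurent r z = 0 := by
  classical
  set u₀ : Vars I k := ⟨u.1, ⟨0, u.2.pos⟩⟩
  set v₀ : Vars I k := ⟨v.1, ⟨0, v.2.pos⟩⟩
  let e := (Equiv.swap u₀ u).trans (Equiv.swap v₀ v)
  have hne : ∀ {a b : Vars I k}, a.1 ≠ b.1 → a ≠ b := fun hfst hab => hfst (congrArg Sigma.fst hab)
  have he : ∀ w, (e w).1 = w.1 := fun w => by
    rw [Equiv.trans_apply, sigma_fst_swap_apply (a := v₀) (b := v) rfl,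
      sigma_fst_swap_apply (a := u₀) (b := u) rfl]
  have hu : e u₀ = u := by
    rw [Equiv.trans_apply, Equiv.swap_apply_left]
    exact Equiv.swap_apply_of_ne_of_ne (hne huv) (hne huv)
  have hv : e v₀ = v := by
    rw [Equiv.trans_apply,
      Equiv.swap_apply_of_ne_of_ne (a := u₀) (b := u) (x := v₀) (hne huv.symm) (hne huv.symm),
      Equiv.swap_apply_left]
  rw [← hsym e he z hz]
  exact h _ (fun w => hz _) (by simp only [Function.comp_apply, hu, hv, hzuv])

end ColorSymmetric

theorem stmt13_general
    (I A : Type) [Fintype I] [Fintype A] [DecidableEq I] [LinearOrder I]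
    (s t : A → I)
    (k : I → ℕ) (r : LaurentPoly I k)
    (hsym : ColorSym r)
    (hvanish : ∀ i j, i ≠ j → ¬ Adjacent s t i j →
      ∀ (hi : 0 < k i) (hj : 0 < k j),
        ∀ z : Vars I k → Fq, (∀ sv, z sv ≠ 0) →
          z ⟨i, ⟨0, hi⟩⟩ = z ⟨j, ⟨0, hj⟩⟩ → evalLaurent r z = 0) :
    (∏ i, ∏ j, if i < j ∧ ¬ Adjacent s t i j then
        ∏ b : Fin (k i), ∏ c : Fin (k j), (zVar k ⟨i, b⟩ - zVar k ⟨j, c⟩)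
      else 1) ∣ r := by
  rw [prod_ite_prod_prod_eq_prod_filter (fun i j => i < j ∧ ¬ Adjacent s t i j)
    (fun u v => zVar k u - zVar k v)]
  have hne : ∀ {u v : Vars I k}, u.1 < v.1 → u ≠ v := fun h => ne_of_apply_ne Sigma.fst h.ne
  refine prod_dvd_of_prime_of_not_dvd (fun x hx => ?_) (fun x hx y hy hxy hdvd => ?_)
    fun x hx => ?_
  · exact prime_laurentVar_sub (hne (mem_filter.1 hx).2.1)
  · exact hxy (eq_of_laurentVar_sub_dvd Sigma.fst (mem_filter.1 hx).2.1 (mem_filter.1 hy).2.1 hdvd)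
  · obtain ⟨hlt, hadj⟩ := (mem_filter.1 hx).2
    refine laurentVar_sub_dvd_of_evalUnits_eq_zero (hne hlt) fun z hz => ?_
    rw [← evalLaurent_eq_evalUnits]
    exact hsym.evalLaurent_eq_zero hlt.ne (hvanish _ _ hlt.ne hadj _ _) (fun w => (z w).ne_zero)
      (congrArg Units.val hz)

/-- if a color-symmetric Laurent polynomial `r` vanishes under the
substitution `z_{i,1} = z_{j,1}` for every ordered pair `(i,j)` of distinct
non-adjacent vertices (with `k_i, k_j ≥ 1`), then `r` is divisible by
`∏_{unordered pairs {i,j} distinct non-adjacent} ∏_{b,c} (z_{i,b} - z_{j,c})`. -/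
theorem stmt13
    (I A : Type) [Fintype I] [Fintype A] [DecidableEq I] [LinearOrder I]
    (s t : A → I) (hNoLoops : ∀ a, s a ≠ t a)
    (k : I → ℕ) (r : LaurentPoly I k)
    (hsym : ColorSym r)
    (hvanish : ∀ i j, i ≠ j → ¬ Adjacent s t i j →
      ∀ (hi : 0 < k i) (hj : 0 < k j),
        ∀ z : Vars I k → Fq, (∀ sv, z sv ≠ 0) →
          z ⟨i, ⟨0, hi⟩⟩ = z ⟨j, ⟨0, hj⟩⟩ → evalLaurent r z = 0) :
    (∏ i, ∏ j, if i < j ∧ ¬ Adjacent s t i j then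
        ∏ b : Fin (k i), ∏ c : Fin (k j), (zVar k ⟨i, b⟩ - zVar k ⟨j, c⟩)
      else 1) ∣ r :=
  stmt13_general I A s t k r hsym hvanish

end ADEShuffle
end
end
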